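/- arXiv:1901.05313 — 6 statements merged into one kernel-verified Lean document; each statement's English description precedes it below -/
import Mathlib

section
/- If κ is a measurable cardinal and the supercompact cardinals below κ are unbounded in κ (i.e., κ is a measurable limit of supercompact cardinals), then κ is strongly compact. -/
open Cardinal Set

/-- `𝒫_κ(λ)`: the collection of subsets of `λ` (identified with its set of
ordinals `{α | α < ord λ}`) of cardinality less than `κ`. -/
def SmallSet (κ lam : Cardinal.{0}) : Set (Set Ordinal.{0}) :=
  {x | x ⊆ Set.Iio lam.ord ∧ #x < Cardinal.lift.{1} κ}

/-- An ultrafilter is `κ`-complete if the intersection of any family of fewer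
than `κ` of its members again belongs to it. -/
def KComplete {X : Type*} (κ : Cardinal.{0}) (U : Ultrafilter X) : Prop :=
  ∀ (ι : Type) (A : ι → Set X), #ι < κ → (∀ i, A i ∈ U) → (⋂ i, A i) ∈ U

/-- An ultrafilter is nonprincipal if it contains no singleton. -/
def Nonprincipal {X : Type*} (U : Ultrafilter X) : Prop :=
  ∀ a : X, {a} ∉ U

/-- A cardinal `κ` is measurable if it is uncountable and carries a
`κ`-complete nonprincipal ultrafilter. -/
def IsMeasurableCard (κ : Cardinal.{0}) : Prop :=
  ℵ₀ < κ ∧ ∃ U : Ultrafilter ↥(Set.Iio κ.ord), KComplete κ U ∧ Nonprincipal U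

/-- An ultrafilter on `𝒫_κ(λ)` is fine if for every `α < λ` the set
`{x | α ∈ x}` belongs to it. -/
def Fine (κ lam : Cardinal.{0}) (U : Ultrafilter ↥(SmallSet κ lam)) : Prop :=
  ∀ α < lam.ord, {x : ↥(SmallSet κ lam) | α ∈ (x : Set Ordinal)} ∈ U

/-- `κ` is `λ`-strongly compact: there is a `κ`-complete fine ultrafilter on `𝒫_κ(λ)`. -/
def IsStronglyCompactTo (κ lam : Cardinal.{0}) : Prop :=
  ∃ U : Ultrafilter ↥(SmallSet κ lam), KComplete κ U ∧ Fine κ lam U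

/-- `κ` is strongly compact: `λ`-strongly compact for every `λ ≥ κ`. -/
def IsStronglyCompactCard (κ : Cardinal.{0}) : Prop :=
  ∀ lam, κ ≤ lam → IsStronglyCompactTo κ lam

/-- An ultrafilter on `𝒫_κ(λ)` is normal if every function `f : 𝒫_κ(λ) → λ`
with `f x ∈ x` almost everywhere is constant on a set in the ultrafilter. -/
def NormalUF (κ lam : Cardinal.{0}) (U : Ultrafilter ↥(SmallSet κ lam)) : Prop :=
  ∀ f : ↥(SmallSet κ lam) → Ordinal, (∀ x, f x < lam.ord) →
    {x : ↥(SmallSet κ lam) | f x ∈ (x : Set Ordinal)} ∈ U →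
    ∃ γ : Ordinal, {x : ↥(SmallSet κ lam) | f x = γ} ∈ U

/-- `κ` is `λ`-supercompact: there is a `κ`-complete normal fine ultrafilter on `𝒫_κ(λ)`. -/
def IsSupercompactTo (κ lam : Cardinal.{0}) : Prop :=
  ∃ U : Ultrafilter ↥(SmallSet κ lam), KComplete κ U ∧ NormalUF κ lam U ∧ Fine κ lam U

/-- `κ` is supercompact: `λ`-supercompact for every `λ ≥ κ`. -/
def IsSupercompactCard (κ : Cardinal.{0}) : Prop :=
  ∀ lam, κ ≤ lam → IsSupercompactTo κ lam

/-- Membership in the bind of ultrafilters. -/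
theorem mem_uf_bind {α : Type*} {β : Type*} {s : Set β} (W : Ultrafilter α)
    (m : α → Ultrafilter β) : s ∈ W.bind m ↔ {a | s ∈ m a} ∈ W :=
  Iff.rfl

/-- A `κ`-complete nonprincipal ultrafilter on `κ` contains all tails. -/
theorem tail_mem {κ : Cardinal.{0}} (hℵ : ℵ₀ < κ) (W : Ultrafilter ↥(Set.Iio κ.ord))
    (hWc : KComplete κ W) (hWnp : Nonprincipal W) (μ : Cardinal.{0}) (hμ : μ < κ) :
    {ξ : ↥(Set.Iio κ.ord) | μ.ord ≤ (ξ : Ordinal)} ∈ W := by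
  have e := Ordinal.ToType.mk (o := μ.ord)
  have key := hWc μ.ord.ToType
    (fun i => {ξ : ↥(Set.Iio κ.ord) | (ξ : Ordinal) ≠ ((e.symm i : Set.Iio μ.ord) : Ordinal)})
    (by rw [Cardinal.mk_ord_toType]; exact hμ)
    (by
      intro i
      have hclt : ((e.symm i : Set.Iio μ.ord) : Ordinal) < κ.ord :=
        lt_of_lt_of_le (e.symm i).2 (Cardinal.ord_le_ord.2 hμ.le)
      have h2 : {ξ : ↥(Set.Iio κ.ord) | (ξ : Ordinal) ≠ ((e.symm i : Set.Iio μ.ord) : Ordinal)}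
          = ({⟨_, hclt⟩} : Set ↥(Set.Iio κ.ord))ᶜ := by
        ext ξ
        simp [Subtype.ext_iff]
      show {ξ : ↥(Set.Iio κ.ord) | (ξ : Ordinal) ≠ ((e.symm i : Set.Iio μ.ord) : Ordinal)} ∈ W
      rw [h2, Ultrafilter.compl_mem_iff_notMem]
      exact hWnp _)
  have heq : (⋂ i, {ξ : ↥(Set.Iio κ.ord) |
      (ξ : Ordinal) ≠ ((e.symm i : Set.Iio μ.ord) : Ordinal)})
      = {ξ : ↥(Set.Iio κ.ord) | μ.ord ≤ (ξ : Ordinal)} := by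
    ext ξ
    simp only [Set.mem_iInter, Set.mem_setOf_eq]
    constructor
    · intro h
      by_contra hlt
      push_neg at hlt
      exact h (e ⟨(ξ : Ordinal), hlt⟩) (by simp)
    · intro h i hi
      have := (e.symm i).2
      rw [← hi] at this
      exact absurd h (not_le.2 this)
  rw [heq] at key
  exact key

/-- If κ is a measurable cardinal and the supercompact cardinals below κ are
unbounded in κ, then κ is strongly compact. -/
theorem measurable_limit_of_supercompacts_is_strongly_compact
    (κ : Cardinal.{0}) (hmeas : IsMeasurableCard κ)
    (hub : ∀ α < κ, ∃ δ : Cardinal.{0}, α < δ ∧ δ < κ ∧ IsSupercompactCard δ) :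
    IsStronglyCompactCard κ := by
  intro lam hlam
  obtain ⟨hℵ, W, hWc, hWnp⟩ := hmeas
  -- choose for each ξ < κ a supercompact δ ξ above card ξ and an ultrafilter on 𝒫_{δ ξ}(λ)
  have hchoice : ∀ ξ : ↥(Set.Iio κ.ord), ∃ δ : Cardinal.{0},
      ((ξ : Ordinal).card < δ ∧ δ < κ) ∧
      ∃ V : Ultrafilter ↥(SmallSet δ lam), KComplete δ V ∧ Fine δ lam V := by
    intro ξ
    obtain ⟨δ, hδ1, hδ2, hδsc⟩ := hub (ξ : Ordinal).card (Cardinal.lt_ord.1 ξ.2)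
    obtain ⟨V, hV1, _, hV3⟩ := hδsc lam (le_trans hδ2.le hlam)
    exact ⟨δ, ⟨hδ1, hδ2⟩, V, hV1, hV3⟩
  choose δ hδ V hVc hVf using hchoice
  -- inclusion maps
  have hsub : ∀ ξ, SmallSet (δ ξ) lam ⊆ SmallSet κ lam := by
    intro ξ x hx
    exact ⟨hx.1, lt_trans hx.2 (Cardinal.lift_lt.2 (hδ ξ).2)⟩
  let m : ∀ ξ : ↥(Set.Iio κ.ord), ↥(SmallSet (δ ξ) lam) → ↥(SmallSet κ lam) :=
    fun ξ x => ⟨(x : Set Ordinal), hsub ξ x.2⟩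
  let U : Ultrafilter ↥(SmallSet κ lam) := W.bind (fun ξ => (V ξ).map (m ξ))
  have memU : ∀ s : Set ↥(SmallSet κ lam),
      s ∈ U ↔ {ξ | (m ξ) ⁻¹' s ∈ V ξ} ∈ W := by
    intro s
    rw [mem_uf_bind]
    simp only [Ultrafilter.mem_map]
  refine ⟨U, ?_, ?_⟩
  · -- κ-completeness
    intro ι A hι hA
    have hTail := tail_mem hℵ W hWc hWnp (#ι) hι
    have hB : ∀ i, {ξ | (m ξ) ⁻¹' (A i) ∈ V ξ} ∈ W := fun i => (memU (A i)).1 (hA i)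
    have hcard : #(Option ι) < κ := by
      rw [Cardinal.mk_option]
      exact Cardinal.add_lt_of_lt hℵ.le hι (lt_trans Cardinal.one_lt_aleph0 hℵ)
    have hInt := hWc (Option ι)
      (fun o => Option.rec {ξ : ↥(Set.Iio κ.ord) | (#ι).ord ≤ (ξ : Ordinal)}
        (fun i => {ξ | (m ξ) ⁻¹' (A i) ∈ V ξ}) o)
      hcard
      (by rintro (_ | i); exacts [hTail, hB i])
    rw [memU]
    refine Filter.mem_of_superset hInt ?_
    intro ξ hξ
    simp only [Set.mem_iInter] at hξ
    have htail : (#ι).ord ≤ (ξ : Ordinal) := hξ none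
    have hιδ : #ι < δ ξ := by
      have h1 : #ι ≤ (ξ : Ordinal).card := by
        have := Ordinal.card_le_card htail
        rwa [Cardinal.card_ord] at this
      exact lt_of_le_of_lt h1 (hδ ξ).1
    have := hVc ξ ι (fun i => (m ξ) ⁻¹' (A i)) hιδ (fun i => hξ (some i))
    simpa only [Set.mem_setOf_eq, Set.preimage_iInter] using this
  · -- fineness
    intro β hβ
    rw [memU]
    refine Filter.mem_of_superset Filter.univ_mem ?_
    intro ξ _
    simp only [Set.mem_setOf_eq]
    have := hVf ξ β hβ
    convert this using 1
    rfl
end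

section
/- If κ is a measurable cardinal and the strongly compact cardinals below κ are unbounded in κ (i.e., κ is a measurable limit of strongly compact cardinals), then κ is strongly compact. -/
open Cardinal Set

-- auxiliary: a κ-complete nonprincipal ultrafilter contains complements of small sets
theorem small_compl_mem {X : Type 1} (κ : Cardinal.{0}) (U : Ultrafilter X)
    (hc : KComplete κ U) (hnp : Nonprincipal U) (s : Set X)
    (hs : #s < Cardinal.lift.{1} κ) : sᶜ ∈ U := by
  obtain ⟨μ, hμκ, hμ⟩ := Cardinal.lt_lift_iff.mp hs
  obtain ⟨e⟩ : Nonempty (↥s ≃ μ.out) := by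
    apply Cardinal.lift_mk_eq'.mp
    rw [Cardinal.mk_out, hμ, Cardinal.lift_id']
  have key : (⋂ i : μ.out, ({(e.symm i : X)}ᶜ : Set X)) = sᶜ := by
    ext x
    simp only [Set.mem_iInter, Set.mem_compl_iff, Set.mem_singleton_iff]
    constructor
    · intro h hx
      exact h (e ⟨x, hx⟩) (by simp)
    · rintro h i rfl
      exact h (e.symm i).2
  rw [← key]
  refine hc μ.out _ (by rwa [Cardinal.mk_out]) fun i => ?_
  exact Ultrafilter.compl_mem_iff_notMem.mpr (hnp _)

/-- If κ is a measurable cardinal and the strongly compact cardinals below κ are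
unbounded in κ, then κ is strongly compact. -/
theorem measurable_limit_of_strongly_compacts_is_strongly_compact
    (κ : Cardinal.{0}) (hmeas : IsMeasurableCard κ)
    (hub : ∀ α < κ, ∃ δ : Cardinal.{0}, α < δ ∧ δ < κ ∧ IsStronglyCompactCard δ) :
    IsStronglyCompactCard κ := by
  obtain ⟨hκ, U, hUc, hUnp⟩ := hmeas
  intro lam hlam
  -- choose strongly compact δ ξ above the cardinality of each ξ < κ.ord
  choose δ hδ1 hδ2 hδ3 using
    fun ξ : ↥(Set.Iio κ.ord) => hub (ξ.1.card) (Cardinal.lt_ord.mp ξ.2)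
  choose V hVc hVf using
    fun ξ : ↥(Set.Iio κ.ord) => hδ3 ξ lam ((hδ2 ξ).le.trans hlam)
  -- inclusion of small sets
  have hsub : ∀ ξ : ↥(Set.Iio κ.ord), SmallSet (δ ξ) lam ⊆ SmallSet κ lam := by
    intro ξ x hx
    exact ⟨hx.1, hx.2.trans (Cardinal.lift_lt.mpr (hδ2 ξ))⟩
  set incl : ∀ ξ : ↥(Set.Iio κ.ord), ↥(SmallSet (δ ξ) lam) → ↥(SmallSet κ lam) :=
    fun ξ x => ⟨x.1, hsub ξ x.2⟩ with hincl
  set W : Ultrafilter ↥(SmallSet κ lam) :=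
    U.bind (fun ξ => (V ξ).map (incl ξ)) with hW
  have memW : ∀ X : Set ↥(SmallSet κ lam),
      X ∈ W ↔ {ξ | (incl ξ) ⁻¹' X ∈ V ξ} ∈ U := by
    intro X
    rfl
  refine ⟨W, ?_, ?_⟩
  · -- κ-completeness
    intro ι A hι hA
    rw [memW]
    have hT : {ξ : ↥(Set.Iio κ.ord) | (#ι).ord ≤ (ξ : Ordinal)} ∈ U := by
      have hsm : #{ξ : ↥(Set.Iio κ.ord) | (ξ : Ordinal) < (#ι).ord}
          < Cardinal.lift.{1} κ := by
        have hinj : Function.Injective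
            (fun p : {ξ : ↥(Set.Iio κ.ord) // (ξ : Ordinal) < (#ι).ord} =>
              (⟨(p.1 : Ordinal), p.2⟩ : ↥(Set.Iio (#ι).ord))) := by
          rintro ⟨⟨a, _⟩, _⟩ ⟨⟨b, _⟩, _⟩ h
          simpa using congrArg Subtype.val h
        calc #{ξ : ↥(Set.Iio κ.ord) | (ξ : Ordinal) < (#ι).ord}
            ≤ #(Set.Iio (#ι).ord) := Cardinal.mk_le_of_injective hinj
          _ = Cardinal.lift.{1} ((#ι).ord).card := Ordinal.mk_Iio_ordinal _
          _ = Cardinal.lift.{1} (#ι) := by rw [Cardinal.card_ord]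
          _ < Cardinal.lift.{1} κ := Cardinal.lift_lt.mpr hι
      have := small_compl_mem κ U hUc hUnp _ hsm
      have heq : {ξ : ↥(Set.Iio κ.ord) | (ξ : Ordinal) < (#ι).ord}ᶜ
          = {ξ : ↥(Set.Iio κ.ord) | (#ι).ord ≤ (ξ : Ordinal)} := by
        ext ξ; simp [not_lt]
      rwa [heq] at this
    have hS : (⋂ i, {ξ : ↥(Set.Iio κ.ord) | (incl ξ) ⁻¹' (A i) ∈ V ξ}) ∈ U := by
      refine hUc ι _ hι fun i => ?_
      exact (memW (A i)).mp (hA i)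
    refine Filter.mem_of_superset (Filter.inter_mem hT hS) ?_
    rintro ξ ⟨hξ1, hξ2⟩
    simp only [Set.mem_iInter, Set.mem_setOf_eq] at hξ2 ⊢
    have hιδ : #ι < δ ξ := by
      have : #ι ≤ (ξ : Ordinal).card := by
        have := Ordinal.card_le_card hξ1
        rwa [Cardinal.card_ord] at this
      exact lt_of_le_of_lt this (hδ1 ξ)
    have : (incl ξ) ⁻¹' (⋂ i, A i) = ⋂ i, (incl ξ) ⁻¹' (A i) :=
      Set.preimage_iInter
    rw [this]
    exact hVc ξ ι _ hιδ hξ2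
  · -- fineness
    intro α hα
    rw [memW]
    have : {ξ : ↥(Set.Iio κ.ord) |
        (incl ξ) ⁻¹' {x : ↥(SmallSet κ lam) | α ∈ (x : Set Ordinal)} ∈ V ξ} = Set.univ := by
      ext ξ
      simp only [Set.mem_setOf_eq, Set.mem_univ, iff_true]
      exact hVf ξ α hα
    rw [this]
    exact Filter.univ_mem
end

section
/- Let κ be a measurable cardinal and let λ ≥ κ. If the set of cardinals δ < κ that are λ-strongly compact is unbounded in κ, then κ itself is λ-strongly compact. -/
open Cardinal Set

/-- In a `κ`-complete nonprincipal ultrafilter on `Iio κ.ord`, the set of points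
`≥ μ.ord` belongs to the ultrafilter, for any `μ < κ`. -/
lemma tail_mem_of_complete (κ : Cardinal.{0}) (U : Ultrafilter ↥(Set.Iio κ.ord))
    (hc : KComplete κ U) (hnp : Nonprincipal U) (μ : Cardinal.{0}) (hμ : μ < κ) :
    {ξ : ↥(Set.Iio κ.ord) | μ.ord ≤ (ξ : Ordinal)} ∈ U := by
  have key : (⋂ i : μ.ord.ToType,
      {ξ : ↥(Set.Iio κ.ord) | (ξ : Ordinal) ≠ ((Ordinal.ToType.mk (o := μ.ord)).symm i : Ordinal)})
      ⊆ {ξ : ↥(Set.Iio κ.ord) | μ.ord ≤ (ξ : Ordinal)} := by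
    intro ξ hξ
    simp only [Set.mem_iInter, Set.mem_setOf_eq] at hξ ⊢
    by_contra h
    push_neg at h
    have : (ξ : Ordinal) ∈ Set.Iio μ.ord := h
    have := hξ ((Ordinal.ToType.mk (o := μ.ord)) ⟨_, this⟩)
    simp at this
  refine U.toFilter.mem_of_superset ?_ key
  refine hc μ.ord.ToType _ ?_ ?_
  · rwa [Cardinal.mk_toType, Cardinal.card_ord]
  · intro i
    have heq : {ξ : ↥(Set.Iio κ.ord) | (ξ : Ordinal) ≠ ((Ordinal.ToType.mk (o := μ.ord)).symm i : Ordinal)}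
        = {ξ : ↥(Set.Iio κ.ord) | (ξ : Ordinal) = ((Ordinal.ToType.mk (o := μ.ord)).symm i : Ordinal)}ᶜ := by
      ext ξ; simp
    rw [heq, Ultrafilter.compl_mem_iff_notMem]
    set β : Ordinal := ((Ordinal.ToType.mk (o := μ.ord)).symm i : Ordinal) with hβ
    by_cases hcase : ∃ ξ0 : ↥(Set.Iio κ.ord), (ξ0 : Ordinal) = β
    · obtain ⟨ξ0, hξ0⟩ := hcase
      have : {ξ : ↥(Set.Iio κ.ord) | (ξ : Ordinal) = β} = {ξ0} := by
        ext ξ; simp only [Set.mem_setOf_eq, Set.mem_singleton_iff]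
        constructor
        · intro h; exact Subtype.ext (h.trans hξ0.symm)
        · intro h; rw [h, hξ0]
      rw [this]; exact hnp ξ0
    · push_neg at hcase
      have : {ξ : ↥(Set.Iio κ.ord) | (ξ : Ordinal) = β} = ∅ := by
        ext ξ; simp [hcase ξ]
      rw [this]; exact U.empty_notMem

lemma smallSet_mono {δ κ lam : Cardinal.{0}} (h : δ ≤ κ) :
    SmallSet δ lam ⊆ SmallSet κ lam :=
  fun x hx => ⟨hx.1, hx.2.trans_le (Cardinal.lift_le.2 h)⟩

/-- If κ is measurable, λ ≥ κ, and the λ-strongly compact cardinals below κ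
are unbounded in κ, then κ is λ-strongly compact. -/
theorem measurable_limit_of_lam_strongly_compacts
    (κ lam : Cardinal.{0}) (hκlam : κ ≤ lam) (hmeas : IsMeasurableCard κ)
    (hub : ∀ α < κ, ∃ δ : Cardinal.{0}, α < δ ∧ δ < κ ∧ IsStronglyCompactTo δ lam) :
    IsStronglyCompactTo κ lam := by
  classical
  obtain ⟨hℵ, U, hUc, hUnp⟩ := hmeas
  -- choose, for each ξ < κ.ord, a λ-strongly compact δ ξ with card ξ < δ ξ < κ
  have hchoice : ∀ ξ : ↥(Set.Iio κ.ord), ∃ δ : Cardinal.{0},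
      (ξ : Ordinal).card < δ ∧ δ < κ ∧ IsStronglyCompactTo δ lam := by
    intro ξ
    exact hub _ (Cardinal.lt_ord.mp ξ.2)
  choose δ hδ1 hδ2 hδ3 using hchoice
  choose W hWc hWf using hδ3
  -- inclusion maps
  let incl : ∀ ξ, ↥(SmallSet (δ ξ) lam) → ↥(SmallSet κ lam) :=
    fun ξ x => ⟨(x : Set Ordinal), smallSet_mono (hδ2 ξ).le x.2⟩
  let V : Ultrafilter ↥(SmallSet κ lam) := U.bind (fun ξ => (W ξ).map (incl ξ))
  have memV : ∀ s : Set ↥(SmallSet κ lam),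
      s ∈ V ↔ {ξ | (incl ξ) ⁻¹' s ∈ W ξ} ∈ U := by
    intro s
    change s ∈ Filter.bind (↑U) (fun ξ => ↑((W ξ).map (incl ξ))) ↔ _
    rw [Filter.mem_bind']
    rfl
  refine ⟨V, ?_, ?_⟩
  · -- κ-completeness
    intro ι A hι hA
    rw [memV]
    have hB : ∀ i, {ξ | (incl ξ) ⁻¹' (A i) ∈ W ξ} ∈ U := fun i => (memV (A i)).mp (hA i)
    have h1 : (⋂ i, {ξ | (incl ξ) ⁻¹' (A i) ∈ W ξ}) ∈ U := hUc ι _ hι hB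
    have h2 : {ξ : ↥(Set.Iio κ.ord) | (#ι).ord ≤ (ξ : Ordinal)} ∈ U :=
      tail_mem_of_complete κ U hUc hUnp _ hι
    refine U.toFilter.mem_of_superset (Filter.inter_mem h1 h2) ?_
    rintro ξ ⟨hξ1, hξ2⟩
    simp only [Set.mem_iInter, Set.mem_setOf_eq] at hξ1 hξ2 ⊢
    have hcard : #ι < δ ξ := by
      have : #ι ≤ (ξ : Ordinal).card := by
        have := Ordinal.card_le_card hξ2
        rwa [Cardinal.card_ord] at this
      exact this.trans_lt (hδ1 ξ)
    have := hWc ξ ι (fun i => (incl ξ) ⁻¹' (A i)) hcard hξ1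
    rwa [← Set.preimage_iInter] at this
  · -- fineness
    intro α hα
    rw [memV]
    have : ∀ ξ, (incl ξ) ⁻¹' {x : ↥(SmallSet κ lam) | α ∈ (x : Set Ordinal)} ∈ W ξ := by
      intro ξ
      have := hWf ξ α hα
      convert this using 1
      rfl
    exact U.toFilter.mem_of_superset Filter.univ_mem (fun ξ _ => this ξ)
end

section
/- Let κ be an uncountable cardinal, let D be a κ-complete nonprincipal ultrafilter on κ, and let λ ≥ κ. Suppose A ∈ D is a set of uncountable cardinals δ < κ and for each δ ∈ A, U_δ is a δ-complete fine ultrafilter on 𝒫_δ(λ). Then the collection U = {X ⊆ 𝒫_κ(λ) : {δ ∈ A : X ∩ 𝒫_δ(λ) ∈ U_δ} ∈ D} is a κ-complete fine ultrafilter on 𝒫_κ(λ). (Here 𝒫_δ(λ) ⊆ 𝒫_κ(λ) since δ < κ.) -/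
open Cardinal Set

/-- Here, an ultrafilter "on `κ`" is represented as an ultrafilter on the
ordinals concentrating on `Set.Iio κ.ord`, and an ultrafilter "on `𝒫_κ(λ)`" is
represented as an ultrafilter on `Set Ordinal` concentrating on
`SmallSet κ lam`.  Fineness for the latter: for every `α < ord λ`, the set
`{x ∈ 𝒫_κ(λ) | α ∈ x}` belongs to the ultrafilter. -/
def FineOn (κ lam : Cardinal.{0}) (U : Ultrafilter (Set Ordinal.{0})) : Prop :=
  SmallSet κ lam ∈ U ∧ ∀ α < lam.ord, {x ∈ SmallSet κ lam | α ∈ x} ∈ U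

/-- Suppose `κ` is an uncountable cardinal, `D` is a `κ`-complete nonprincipal
ultrafilter on `κ`, and `λ ≥ κ`.  Suppose `A ∈ D` is a set of uncountable
cardinals `δ < κ` and, for each `δ ∈ A`, `Uf δ` is a `δ`-complete fine
ultrafilter on `𝒫_δ(λ)`.  Then the collection
`U = {X ⊆ 𝒫_κ(λ) : {δ ∈ A : X ∩ 𝒫_δ(λ) ∈ Uf δ} ∈ D}` is a `κ`-complete fine
ultrafilter on `𝒫_κ(λ)`. -/
theorem combined_ultrafilter_strongly_compact
    (κ lam : Cardinal.{0}) (hκ : ℵ₀ < κ) (hκlam : κ ≤ lam)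
    (D : Ultrafilter Ordinal.{0}) (hDconc : Set.Iio κ.ord ∈ D)
    (hDcomp : KComplete κ D) (hDnp : Nonprincipal D)
    (A : Set Ordinal.{0}) (hAD : A ∈ D)
    (hAmem : ∀ δ ∈ A, ∃ c : Cardinal.{0}, ℵ₀ < c ∧ c < κ ∧ c.ord = δ)
    (Uf : Ordinal.{0} → Ultrafilter (Set Ordinal.{0}))
    (hUfcomp : ∀ δ ∈ A, KComplete δ.card (Uf δ))
    (hUffine : ∀ δ ∈ A, FineOn δ.card lam (Uf δ)) :
    ∃ U : Ultrafilter (Set Ordinal.{0}),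
      (∀ X : Set (Set Ordinal.{0}),
        X ∈ U ↔ {δ ∈ A | X ∩ SmallSet δ.card lam ∈ Uf δ} ∈ D) ∧
      KComplete κ U ∧ FineOn κ lam U := by
  classical
  -- sets of size < κ are not in D
  have hsmall : ∀ s : Set Ordinal.{0}, #s < Cardinal.lift.{1} κ → s ∉ D := by
    intro s hs hsD
    obtain ⟨c, hcκ, hc_eq⟩ := Cardinal.lt_lift_iff.mp hs
    have hmk : #(ULift.{1} c.out) = #s := by
      rw [Cardinal.mk_uLift, Cardinal.mk_out, hc_eq]
    obtain ⟨e⟩ := Cardinal.eq.mp hmk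
    have hB : ∀ i : c.out, ({(e (ULift.up i) : Ordinal)}ᶜ : Set Ordinal) ∈ D := fun i =>
      Ultrafilter.compl_mem_iff_notMem.mpr (hDnp _)
    have h2 : (⋂ i : c.out, ({(e (ULift.up i) : Ordinal)}ᶜ : Set Ordinal)) ∈ D :=
      hDcomp c.out _ (by rw [Cardinal.mk_out]; exact hcκ) hB
    have h3 : (⋂ i : c.out, ({(e (ULift.up i) : Ordinal)}ᶜ : Set Ordinal)) ⊆ sᶜ := by
      intro x hx hxs
      obtain ⟨i, hi⟩ := e.surjective ⟨x, hxs⟩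
      have hxi := Set.mem_iInter.mp hx i.down
      apply hxi
      have : e (ULift.up i.down) = (⟨x, hxs⟩ : s) := by
        rw [← hi]
      rw [Set.mem_singleton_iff, this]
    exact Ultrafilter.compl_mem_iff_notMem.mp (D.mem_of_superset h2 h3) hsD
  -- κ is a strong limit
  have hstrong : ∀ μ : Cardinal.{0}, μ < κ → (2 ^ μ) < κ := by
    intro μ hμ
    by_contra hle
    push_neg at hle
    have hcard : #(Set.Iio κ.ord) = Cardinal.lift.{1} κ := by
      rw [Ordinal.mk_Iio_ordinal, Cardinal.card_ord]
    have hpow : #(ULift.{1} (μ.out → Bool)) = Cardinal.lift.{1} (2 ^ μ) := by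
      rw [Cardinal.mk_uLift, ← Cardinal.power_def, Cardinal.mk_bool, Cardinal.mk_out]
    have hinj : Nonempty ((Set.Iio κ.ord) ↪ ULift.{1} (μ.out → Bool)) := by
      rw [← Cardinal.le_def, hcard, hpow]
      exact Cardinal.lift_le.mpr hle
    obtain ⟨f⟩ := hinj
    set P : μ.out → Bool → Set Ordinal.{0} := fun i b =>
      {x | ∃ h : x ∈ Set.Iio κ.ord, (f ⟨x, h⟩).down i = b} with hP
    have hPD : ∀ i, ∃ b, P i b ∈ D := by
      intro i
      have hsub : Set.Iio κ.ord ⊆ P i true ∪ P i false := by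
        intro x hx
        by_cases hb : (f ⟨x, hx⟩).down i = true
        · exact Or.inl ⟨hx, hb⟩
        · exact Or.inr ⟨hx, by simpa using hb⟩
      rcases Ultrafilter.union_mem_iff.mp (D.mem_of_superset hDconc hsub) with h | h
      exacts [⟨true, h⟩, ⟨false, h⟩]
    choose b hb using hPD
    have hT : (Set.Iio κ.ord ∩ ⋂ i, P i (b i)) ∈ D :=
      Filter.inter_mem hDconc (hDcomp μ.out _ (by rw [Cardinal.mk_out]; exact hμ) hb)
    obtain ⟨a, ha⟩ := Ultrafilter.nonempty_of_mem hT
    have hsub : (Set.Iio κ.ord ∩ ⋂ i, P i (b i)) ⊆ {a} := by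
      intro x hx
      have hfx : f ⟨x, hx.1⟩ = f ⟨a, ha.1⟩ := by
        ext i
        obtain ⟨h1, h2⟩ := Set.mem_iInter.mp hx.2 i
        obtain ⟨h1', h2'⟩ := Set.mem_iInter.mp ha.2 i
        exact h2.trans h2'.symm
      have := f.injective hfx
      rw [Set.mem_singleton_iff]
      exact congrArg Subtype.val this
    exact hDnp a (D.mem_of_superset hT hsub)
  -- the combined ultrafilter
  set U : Ultrafilter (Set Ordinal.{0}) := D.bind Uf with hU
  have memU : ∀ X : Set (Set Ordinal.{0}), X ∈ U ↔ {δ | X ∈ Uf δ} ∈ D := by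
    intro X
    show X ∈ (Filter.bind ↑D fun δ => ↑(Uf δ)) ↔ _
    exact Filter.mem_bind'
  have hδcards : ∀ δ ∈ A, δ.card < κ ∧ ℵ₀ < δ.card := by
    intro δ hδ
    obtain ⟨c, hc1, hc2, hc3⟩ := hAmem δ hδ
    rw [← hc3, Cardinal.card_ord]
    exact ⟨hc2, hc1⟩
  -- characterization
  have key : ∀ X : Set (Set Ordinal.{0}),
      ({δ | X ∈ Uf δ} ∈ D ↔ {δ ∈ A | X ∩ SmallSet δ.card lam ∈ Uf δ} ∈ D) := by
    intro X
    have hagree : ∀ δ ∈ A, (X ∈ Uf δ ↔ X ∩ SmallSet δ.card lam ∈ Uf δ) := by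
      intro δ hδ
      have hS : SmallSet δ.card lam ∈ Uf δ := (hUffine δ hδ).1
      exact ⟨fun h => Filter.inter_mem h hS,
        fun h => (Uf δ).mem_of_superset h Set.inter_subset_left⟩
    constructor
    · intro h
      refine D.mem_of_superset (Filter.inter_mem h hAD) ?_
      rintro δ ⟨h1, h2⟩
      exact ⟨h2, (hagree δ h2).mp h1⟩
    · intro h
      refine D.mem_of_superset h ?_
      rintro δ ⟨h1, h2⟩
      exact (hagree δ h1).mpr h2
  -- κ-completeness
  have hcomp : KComplete κ U := by
    intro ι X hι hX
    rw [memU]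
    have hsucc : Order.succ (#ι) < κ :=
      lt_of_le_of_lt (Order.succ_le_of_lt (Cardinal.cantor (#ι))) (hstrong _ hι)
    have hbig : {δ : Ordinal.{0} | (Order.succ (#ι)).ord ≤ δ} ∈ D := by
      have hnot : Set.Iio (Order.succ (#ι)).ord ∉ D := by
        apply hsmall
        rw [Ordinal.mk_Iio_ordinal, Cardinal.card_ord]
        exact Cardinal.lift_lt.mpr hsucc
      have := Ultrafilter.compl_mem_iff_notMem.mpr hnot
      have hce : (Set.Iio (Order.succ (#ι)).ord)ᶜ
          = {δ : Ordinal.{0} | (Order.succ (#ι)).ord ≤ δ} := by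
        ext δ
        simp [not_lt]
      rwa [hce] at this
    have hT : (A ∩ {δ : Ordinal.{0} | (Order.succ (#ι)).ord ≤ δ}
        ∩ ⋂ i, {δ | X i ∈ Uf δ}) ∈ D := by
      refine Filter.inter_mem (Filter.inter_mem hAD hbig) (hDcomp ι _ hι ?_)
      intro i
      exact (memU (X i)).mp (hX i)
    refine D.mem_of_superset hT ?_
    rintro δ ⟨⟨hδA, hδbig⟩, hδX⟩
    have hμδ : #ι < δ.card := by
      have h1 : Order.succ (#ι) ≤ δ.card := by
        have := Ordinal.card_le_card hδbig
        rwa [Cardinal.card_ord] at this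
      exact lt_of_lt_of_le (Order.lt_succ (#ι)) h1
    exact hUfcomp δ hδA ι X hμδ (fun i => Set.mem_iInter.mp hδX i)
  -- fineness
  have hfine : FineOn κ lam U := by
    constructor
    · rw [memU]
      refine D.mem_of_superset hAD ?_
      intro δ hδ
      refine (Uf δ).mem_of_superset (hUffine δ hδ).1 ?_
      rintro x ⟨hx1, hx2⟩
      exact ⟨hx1, lt_trans hx2 (Cardinal.lift_lt.mpr (hδcards δ hδ).1)⟩
    · intro α hα
      rw [memU]
      refine D.mem_of_superset hAD ?_
      intro δ hδ
      refine (Uf δ).mem_of_superset ((hUffine δ hδ).2 α hα) ?_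
      rintro x ⟨⟨hx1, hx2⟩, hx3⟩
      exact ⟨⟨hx1, lt_trans hx2 (Cardinal.lift_lt.mpr (hδcards δ hδ).1)⟩, hx3⟩
  exact ⟨U, fun X => (memU X).trans (key X), hcomp, hfine⟩
end

section
/- Let κ be an uncountable regular cardinal and suppose there is a κ-complete fine ultrafilter on 𝒫_κ(κ) (i.e., κ is κ-strongly compact). Then the pushforward of such an ultrafilter under the map x ↦ sup(x) is a κ-complete nonprincipal ultrafilter on κ that contains every final segment of κ; in particular, κ is measurable. -/
open Cardinal Set

private lemma supLtAux (κ : Cardinal.{0}) (hreg : κ.IsRegular)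
    (x : ↥(SmallSet κ κ)) : sSup (x : Set Ordinal.{0}) < κ.ord := by
  obtain ⟨hsub, hcard⟩ := x.2
  rcases Set.eq_empty_or_nonempty (x : Set Ordinal) with he | hne
  · rw [he, csSup_empty]
    rw [show (⊥ : Ordinal) = (0 : Cardinal).ord by simp]
    exact Cardinal.ord_lt_ord.2 hreg.pos
  · obtain ⟨c, hc⟩ := Cardinal.mem_range_lift_of_le hcard.le
    have hcκ : c < κ := by rwa [← Cardinal.lift_lt.{0,1}, hc]
    have hmk : Cardinal.lift.{0} #(x : Set Ordinal) =
        Cardinal.lift.{1} #(Quotient.out c) := by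
      rw [Cardinal.lift_id', Cardinal.mk_out, hc]
    obtain ⟨e⟩ := Cardinal.lift_mk_eq'.mp hmk
    set f : Quotient.out c → Ordinal := fun i => ((e.symm i : (x : Set Ordinal)) : Ordinal)
      with hfdef
    have hrange : Set.range f = (x : Set Ordinal) := by
      ext a
      simp only [Set.mem_range]
      constructor
      · rintro ⟨i, rfl⟩; exact (e.symm i).2
      · intro ha; exact ⟨e ⟨a, ha⟩, by simp [hfdef]⟩
    rw [← hrange]
    exact Ordinal.iSup_lt_ord (by simpa [Cardinal.mk_out, hreg.cof_eq] using hcκ)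
      (fun i => hsub (e.symm i).2)

/-- If κ is uncountable regular and there is a κ-complete fine ultrafilter on
𝒫_κ(κ), then the pushforward of such an ultrafilter under `x ↦ sup x` is a
κ-complete nonprincipal ultrafilter concentrating on κ containing every final
segment of κ; in particular κ is measurable. -/
theorem pushforward_sup_measurable
    (κ : Cardinal.{0}) (hℵ : ℵ₀ < κ) (hreg : κ.IsRegular)
    (U : Ultrafilter ↥(SmallSet κ κ)) (hc : KComplete κ U) (hf : Fine κ κ U) :
    Set.Iio κ.ord ∈ Ultrafilter.map (fun x : ↥(SmallSet κ κ) => sSup (x : Set Ordinal)) U ∧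
    KComplete κ (Ultrafilter.map (fun x : ↥(SmallSet κ κ) => sSup (x : Set Ordinal)) U) ∧
    Nonprincipal (Ultrafilter.map (fun x : ↥(SmallSet κ κ) => sSup (x : Set Ordinal)) U) ∧
    (∀ α < κ.ord, {β : Ordinal | α ≤ β ∧ β < κ.ord} ∈
      Ultrafilter.map (fun x : ↥(SmallSet κ κ) => sSup (x : Set Ordinal)) U) ∧
    IsMeasurableCard κ := by
  set g : ↥(SmallSet κ κ) → Ordinal := fun x => sSup (x : Set Ordinal) with hg
  have hbdd : ∀ x : ↥(SmallSet κ κ), BddAbove (x : Set Ordinal) :=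
    fun x => ⟨κ.ord, fun b hb => (x.2.1 hb).le⟩
  have hsup : ∀ x, g x < κ.ord := supLtAux κ hreg
  have key : ∀ a : Ordinal, g ⁻¹' {a} ∉ U := by
    intro a ha
    by_cases hlt : a < κ.ord
    · have hsucc : Order.succ a < κ.ord :=
        (Cardinal.isSuccLimit_ord hreg.aleph0_le).succ_lt hlt
      have hmem := Filter.inter_mem ha (hf (Order.succ a) hsucc)
      obtain ⟨x, hx1, hx2⟩ := Filter.nonempty_of_mem hmem
      have hle : Order.succ a ≤ g x := le_csSup (hbdd x) hx2
      rw [Set.mem_preimage, Set.mem_singleton_iff] at hx1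
      rw [hx1] at hle
      exact lt_irrefl a (Order.succ_le_iff.mp hle)
    · have hempty : g ⁻¹' {a} = ∅ := by
        ext x
        simp only [Set.mem_preimage, Set.mem_singleton_iff, Set.mem_empty_iff_false,
          iff_false]
        intro h
        exact hlt (h ▸ hsup x)
      rw [hempty] at ha
      exact Ultrafilter.empty_notMem ha
  have hcomp : ∀ {Y : Type 1} (m : ↥(SmallSet κ κ) → Y),
      KComplete κ (Ultrafilter.map m U) := by
    intro Y m ι A hι hA
    rw [Ultrafilter.mem_map, Set.preimage_iInter]
    exact hc ι _ hι fun i => Ultrafilter.mem_map.mp (hA i)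
  refine ⟨?_, hcomp g, ?_, ?_, hℵ, ?_⟩
  · rw [Ultrafilter.mem_map]
    exact Filter.univ_mem' hsup
  · intro a ha
    rw [Ultrafilter.mem_map] at ha
    exact key a ha
  · intro α hα
    rw [Ultrafilter.mem_map]
    refine Filter.mem_of_superset (hf α hα) fun x hx => ?_
    exact ⟨le_csSup (hbdd x) hx, hsup x⟩
  · refine ⟨Ultrafilter.map (fun x => (⟨g x, hsup x⟩ : ↥(Set.Iio κ.ord))) U,
      hcomp _, ?_⟩
    rintro ⟨a, haa⟩ ha
    rw [Ultrafilter.mem_map] at ha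
    refine key a ?_
    convert ha using 1
    ext x
    simp [Subtype.ext_iff]
end

section
/- If κ is the least measurable limit of supercompact cardinals (that is, κ is measurable, the supercompact cardinals below κ are unbounded in κ, and no cardinal δ < κ has both of these properties), then κ is not 2^κ-supercompact. -/
open Cardinal Set

namespace LML
open Cardinal Set

/-- completeness for `Type 1`-indexed families -/
lemma kcomplete_iInter {X : Type 1} {κ : Cardinal.{0}} {U : Ultrafilter X}
    (hU : KComplete κ U) {ι : Type 1} (A : ι → Set X)
    (hι : #ι < Cardinal.lift.{1} κ) (hA : ∀ i, A i ∈ U) : (⋂ i, A i) ∈ U := by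
  obtain ⟨c, hc, hlift⟩ := Cardinal.lt_lift_iff.mp hι
  have hne : Nonempty (c.out ≃ ι) := by
    rw [← Cardinal.lift_mk_eq.{0,1,1}]
    simp [Cardinal.mk_out, hlift]
  obtain ⟨f⟩ := hne
  have h1 : (⋂ j : c.out, A (f j)) ∈ U := by
    apply hU c.out (fun j => A (f j))
    · simpa [Cardinal.mk_out] using hc
    · intro j; exact hA (f j)
  have h2 : (⋂ j : c.out, A (f j)) = ⋂ i, A i := f.surjective.iInter_comp A
  rwa [h2] at h1

section Main
variable {κ lam : Cardinal.{0}} {U : Ultrafilter ↥(SmallSet κ lam)}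

lemma subset_Iio (x : ↥(SmallSet κ lam)) : (x : Set Ordinal) ⊆ Iio lam.ord := x.2.1
lemma mk_lt (x : ↥(SmallSet κ lam)) : #(x : Set Ordinal) < Cardinal.lift.{1} κ := x.2.2

/-- pressing down -/
lemma press (hnorm : NormalUF κ lam U) (hlam0 : 0 < lam.ord)
    {S : Set ↥(SmallSet κ lam)} (hS : S ∈ U)
    (f : ∀ x : ↥(SmallSet κ lam), x ∈ S → Ordinal.{0})
    (hmem : ∀ (x : ↥(SmallSet κ lam)) (hx : x ∈ S), f x hx ∈ (x : Set Ordinal)) :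
    ∃ γ : Ordinal.{0}, {x : ↥(SmallSet κ lam) | ∃ hx : x ∈ S, f x hx = γ} ∈ U := by
  classical
  set g : ↥(SmallSet κ lam) → Ordinal.{0} := fun (x : ↥(SmallSet κ lam)) => if hx : x ∈ S then f x hx else 0 with hg
  have hglt : ∀ x, g x < lam.ord := by
    intro x; by_cases hx : x ∈ S
    · simp only [hg, dif_pos hx]; exact x.2.1 (hmem x hx)
    · simp only [hg, dif_neg hx]; exact hlam0
  have hgx : {x : ↥(SmallSet κ lam) | g x ∈ (x : Set Ordinal)} ∈ U := by
    apply Filter.mem_of_superset hS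
    intro x hx
    simp only [Set.mem_setOf_eq, hg, dif_pos hx]
    exact hmem x hx
  obtain ⟨γ, hγ⟩ := hnorm g hglt hgx
  refine ⟨γ, Filter.mem_of_superset (Filter.inter_mem hγ hS) ?_⟩
  rintro x ⟨h1, h2⟩
  refine ⟨h2, ?_⟩
  simpa only [Set.mem_setOf_eq, hg, dif_pos h2] using h1

/-- diagonal intersection -/
lemma diag (hnorm : NormalUF κ lam U) (hlam0 : 0 < lam.ord)
    (X : Ordinal → Set ↥(SmallSet κ lam)) (hX : ∀ α < lam.ord, X α ∈ U) :
    {x : ↥(SmallSet κ lam) | ∀ α ∈ (x : Set Ordinal), x ∈ X α} ∈ U := by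
  classical
  by_contra hcon
  have hBad : {x : ↥(SmallSet κ lam) | ∃ α, α ∈ (x : Set Ordinal) ∧ x ∉ X α} ∈ U := by
    have h := (Ultrafilter.compl_mem_iff_notMem).2 hcon
    have heq : {x : ↥(SmallSet κ lam) | ∃ α, α ∈ (x : Set Ordinal) ∧ x ∉ X α}
        = {x : ↥(SmallSet κ lam) | ∀ α ∈ (x : Set Ordinal), x ∈ X α}ᶜ := by
      ext x
      simp only [Set.mem_compl_iff, Set.mem_setOf_eq]
      push_neg
      rfl
    rw [heq]
    exact h
  obtain ⟨γ, hγ⟩ := press hnorm hlam0 hBad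
    (fun x hx => hx.choose) (fun x hx => hx.choose_spec.1)
  have hγlt : γ < lam.ord := by
    obtain ⟨x, hx, heq⟩ := Ultrafilter.nonempty_of_mem hγ
    exact x.2.1 (heq ▸ hx.choose_spec.1)
  obtain ⟨x, hx1, hx2⟩ := Ultrafilter.nonempty_of_mem (Filter.inter_mem hγ (hX γ hγlt))
  obtain ⟨hx, heq⟩ := hx1
  exact (heq ▸ hx.choose_spec.2) hx2

end Main
end LML

section Chunk2
open Cardinal Set
variable {κ lam : Cardinal.{0}} {U : Ultrafilter ↥(SmallSet κ lam)}

/-- `x ∩ κ` is downward closed -/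
def DC (κ : Cardinal.{0}) (x : Set Ordinal.{0}) : Prop :=
  ∀ α ∈ x, α < κ.ord → ∀ β < α, β ∈ x

/-- the ordinal `x ∩ κ`, when that set is downward closed -/
noncomputable def gam (κ : Cardinal.{0}) (x : Set Ordinal.{0}) : Ordinal.{0} :=
  sInf {γ : Ordinal | γ ∉ x ∨ κ.ord ≤ γ}

lemma gamma_spec {x : Set Ordinal.{0}} (h : DC κ x) :
    x ∩ Iio κ.ord = Iio (gam κ x) := by
  have hne : (Set.Iio κ.ord).Nonempty ∨ True := Or.inr trivial
  have hmemT : κ.ord ∈ {γ : Ordinal.{0} | γ ∉ x ∨ κ.ord ≤ γ} := Or.inr le_rfl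
  have hg : gam κ x ∈ {γ : Ordinal.{0} | γ ∉ x ∨ κ.ord ≤ γ} :=
    csInf_mem ⟨κ.ord, hmemT⟩
  ext β
  constructor
  · rintro ⟨hβx, hβκ⟩
    by_contra hβ
    have hle : gam κ x ≤ β := not_lt.mp hβ
    rcases hg with hg1 | hg2
    · rcases eq_or_lt_of_le hle with rfl | hlt
      · exact hg1 hβx
      · exact hg1 (h β hβx hβκ _ hlt)
    · exact absurd (lt_of_le_of_lt (hg2.trans hle) hβκ) (lt_irrefl _)
  · intro hβ
    have : β ∉ {γ : Ordinal.{0} | γ ∉ x ∨ κ.ord ≤ γ} :=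
      notMem_of_lt_csInf hβ (OrderBot.bddBelow _)
    simp only [Set.mem_setOf_eq] at this
    push_neg at this
    exact ⟨this.1, this.2⟩

lemma gamma_lt {x : ↥(SmallSet κ lam)} (h : DC κ (x : Set Ordinal)) :
    gam κ (x : Set Ordinal) < κ.ord := by
  rw [Cardinal.lt_ord]
  have h1 : Iio (gam κ (x : Set Ordinal)) ⊆ (x : Set Ordinal) := by
    rw [← gamma_spec h]; exact Set.inter_subset_left
  have h2 := (Cardinal.mk_le_mk_of_subset h1).trans_lt x.2.2
  rwa [Ordinal.mk_Iio_ordinal, Cardinal.lift_lt] at h2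

lemma mem_iff_lt_gamma {x : Set Ordinal.{0}} (h : DC κ x) {β : Ordinal.{0}}
    (hβ : β < κ.ord) : β ∈ x ↔ β < gam κ x := by
  constructor
  · intro hm
    have : β ∈ x ∩ Iio κ.ord := ⟨hm, hβ⟩
    rwa [gamma_spec h] at this
  · intro hm
    have : β ∈ Iio (gam κ x) := hm
    rw [← gamma_spec h] at this
    exact this.1

/-- the Good set is large -/
lemma good_mem (hnorm : NormalUF κ lam U) (hfine : Fine κ lam U)
    (hcomp : KComplete κ U) (hκlam : κ ≤ lam) (hlam0 : 0 < lam.ord) :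
    {x : ↥(SmallSet κ lam) | DC κ (x : Set Ordinal)} ∈ U := by
  classical
  have hκord : κ.ord ≤ lam.ord := Cardinal.ord_le_ord.mpr hκlam
  set X : Ordinal → Set ↥(SmallSet κ lam) :=
    fun α => {x | α < κ.ord → ∀ β < α, β ∈ (x : Set Ordinal)} with hX
  have hXU : ∀ α < lam.ord, X α ∈ U := by
    intro α _
    by_cases hα : α < κ.ord
    · have h1 : (⋂ β : ↥(Iio α : Set Ordinal.{0}),
          {x : ↥(SmallSet κ lam) | (β : Ordinal) ∈ (x : Set Ordinal)}) ∈ U := by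
        apply LML.kcomplete_iInter hcomp
        · rw [Ordinal.mk_Iio_ordinal, Cardinal.lift_lt]
          exact Cardinal.lt_ord.mp hα
        · intro β
          exact hfine β (lt_of_lt_of_le (lt_trans β.2 hα) hκord)
      refine Filter.mem_of_superset h1 ?_
      intro x hx _ β hβ
      exact Set.mem_iInter.mp hx ⟨β, hβ⟩
    · refine Filter.mem_of_superset Filter.univ_mem ?_
      intro x _ hc
      exact absurd hc hα
  have hdiag := LML.diag hnorm hlam0 X hXU
  refine Filter.mem_of_superset hdiag ?_
  intro x hx
  intro α hαx hακ β hβ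
  exact hx α hαx hακ β hβ

lemma exists_code (h2 : (2 : Cardinal.{0}) ^ κ ≤ lam) (h2' : lam ≤ 2 ^ κ) :
    Nonempty (Set (↥(Iio κ.ord : Set Ordinal.{0})) ≃ ↥(Iio lam.ord : Set Ordinal.{0})) := by
  rw [← Cardinal.eq]
  rw [Cardinal.mk_set, Ordinal.mk_Iio_ordinal, Ordinal.mk_Iio_ordinal,
    Cardinal.card_ord, Cardinal.card_ord]
  have hl : lam = 2 ^ κ := le_antisymm h2' h2
  rw [hl, Cardinal.lift_power, Cardinal.lift_two]

lemma exists_fcode (h2 : (2 : Cardinal.{0}) ^ κ ≤ lam) (h2' : lam ≤ 2 ^ κ) (hκ : ℵ₀ ≤ κ) :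
    Nonempty ((↥(Iio κ.ord : Set Ordinal.{0}) → ↥(Iio κ.ord : Set Ordinal.{0}))
      ≃ ↥(Iio lam.ord : Set Ordinal.{0})) := by
  rw [← Cardinal.eq]
  have hmk : #(↥(Iio κ.ord : Set Ordinal.{0}) → ↥(Iio κ.ord : Set Ordinal.{0}))
      = (Cardinal.lift.{1} κ) ^ (Cardinal.lift.{1} κ) := by
    rw [← Cardinal.power_def, Ordinal.mk_Iio_ordinal, Cardinal.card_ord]
  rw [hmk, Ordinal.mk_Iio_ordinal, Cardinal.card_ord]
  have hl : lam = 2 ^ κ := le_antisymm h2' h2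
  rw [Cardinal.power_self_eq (by simpa using hκ : ℵ₀ ≤ Cardinal.lift.{1} κ),
    hl, Cardinal.lift_power, Cardinal.lift_two]

end Chunk2

section Chunk3
open Cardinal Set

abbrev KT (κ : Cardinal.{0}) := ↥(Iio κ.ord : Set Ordinal.{0})
abbrev LamT (lam : Cardinal.{0}) := ↥(Iio lam.ord : Set Ordinal.{0})

variable {κ lam : Cardinal.{0}} {U : Ultrafilter ↥(SmallSet κ lam)}

def Coded (e : Set (KT κ) ≃ LamT lam) (x : ↥(SmallSet κ lam)) (A : Set (KT κ)) : Prop :=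
  ((e A : LamT lam) : Ordinal) ∈ (x : Set Ordinal)

/-- For fixed `A`, almost every `x` codes `A`. -/
lemma coded_ae (hfine : Fine κ lam U) (e : Set (KT κ) ≃ LamT lam) (A : Set (KT κ)) :
    {x : ↥(SmallSet κ lam) | Coded e x A} ∈ U :=
  hfine ((e A : LamT lam) : Ordinal) (e A).2

/-- pressing down a coded set: it is almost-everywhere constant on a large set -/
lemma press_code (hnorm : NormalUF κ lam U) (hlam0 : 0 < lam.ord)
    (e : Set (KT κ) ≃ LamT lam) {S : Set ↥(SmallSet κ lam)} (hS : S ∈ U)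
    (F : ∀ x : ↥(SmallSet κ lam), x ∈ S → Set (KT κ))
    (hF : ∀ x hx, Coded e x (F x hx)) :
    ∃ (A : Set (KT κ)) (T : Set ↥(SmallSet κ lam)), T ∈ U ∧ T ⊆ S ∧
      ∀ x (hx : x ∈ S), x ∈ T → F x hx = A := by
  obtain ⟨γ, hγ⟩ := LML.press hnorm hlam0 hS
    (fun x hx => ((e (F x hx) : LamT lam) : Ordinal)) (fun x hx => hF x hx)
  set T : Set ↥(SmallSet κ lam) := {x | ∃ hx : x ∈ S, ((e (F x hx) : LamT lam) : Ordinal) = γ} ∩ S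
    with hT
  have hTU : T ∈ U := Filter.inter_mem hγ hS
  obtain ⟨x₀, hx₀⟩ := Ultrafilter.nonempty_of_mem hTU
  have hx₀S : x₀ ∈ S := hx₀.2
  refine ⟨F x₀ hx₀S, T, hTU, Set.inter_subset_right, ?_⟩
  intro x hx hxT
  obtain ⟨⟨hx', hval⟩, -⟩ := hxT
  obtain ⟨hx₀', hval₀⟩ := hx₀.1
  have h1 : ((e (F x hx) : LamT lam) : Ordinal) = γ := hval
  have h2 : ((e (F x₀ hx₀S) : LamT lam) : Ordinal) = γ := hval₀
  exact e.injective (Subtype.coe_injective (h1.trans h2.symm))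

def sgn (s : Bool) (A : Set (KT κ)) : Set (KT κ) := if s then A else Aᶜ

/-- the core reflection lemma: for almost every `x`, any Boolean combination of
three sets coded in `x` which is `D`-large meets `x ∩ κ`. -/
lemma core (hnorm : NormalUF κ lam U) (hfine : Fine κ lam U)
    (hκlam : κ ≤ lam) (hlam0 : 0 < lam.ord)
    (e : Set (KT κ) ≃ LamT lam) (D : Ultrafilter (KT κ)) (s₁ s₂ s₃ : Bool) :
    {x : ↥(SmallSet κ lam) | ∀ A₁ A₂ A₃ : Set (KT κ),
      Coded e x A₁ → Coded e x A₂ → Coded e x A₃ →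
      sgn s₁ A₁ ∩ sgn s₂ A₂ ∩ sgn s₃ A₃ ∈ D →
      ∃ ξ : KT κ, ξ ∈ sgn s₁ A₁ ∩ sgn s₂ A₂ ∩ sgn s₃ A₃ ∧
        (ξ : Ordinal) ∈ (x : Set Ordinal)} ∈ U := by
  classical
  by_contra hcon
  set Q : ↥(SmallSet κ lam) → Prop := fun x => ∀ A₁ A₂ A₃ : Set (KT κ),
      Coded e x A₁ → Coded e x A₂ → Coded e x A₃ →
      sgn s₁ A₁ ∩ sgn s₂ A₂ ∩ sgn s₃ A₃ ∈ D →
      ∃ ξ : KT κ, ξ ∈ sgn s₁ A₁ ∩ sgn s₂ A₂ ∩ sgn s₃ A₃ ∧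
        (ξ : Ordinal) ∈ (x : Set Ordinal) with hQ
  have hBad : {x : ↥(SmallSet κ lam) | ¬ Q x} ∈ U := by
    rw [← Set.compl_setOf]
    exact (Ultrafilter.compl_mem_iff_notMem).2 hcon
  have hwit : ∀ x : ↥(SmallSet κ lam), ¬ Q x → ∃ t : Set (KT κ) × Set (KT κ) × Set (KT κ),
      Coded e x t.1 ∧ Coded e x t.2.1 ∧ Coded e x t.2.2 ∧
      sgn s₁ t.1 ∩ sgn s₂ t.2.1 ∩ sgn s₃ t.2.2 ∈ D ∧
      ∀ ξ : KT κ, ξ ∈ sgn s₁ t.1 ∩ sgn s₂ t.2.1 ∩ sgn s₃ t.2.2 →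
        (ξ : Ordinal) ∉ (x : Set Ordinal) := by
    intro x hx
    simp only [hQ] at hx
    push_neg at hx
    obtain ⟨A₁, A₂, A₃, h1, h2, h3, h4, h5⟩ := hx
    exact ⟨⟨A₁, A₂, A₃⟩, h1, h2, h3, h4, h5⟩
  choose tw h1 h2 h3 h4 h5 using hwit
  -- press the first code
  obtain ⟨A₁, T₁, hT₁U, hT₁S, hT₁⟩ := press_code hnorm hlam0 e hBad
    (fun x hx => (tw x hx).1) h1
  obtain ⟨A₂, T₂, hT₂U, hT₂S, hT₂⟩ := press_code hnorm hlam0 e (Filter.inter_mem hT₁U hBad)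
    (fun x hx => (tw x hx.2).2.1) (fun x hx => h2 x hx.2)
  obtain ⟨A₃, T₃, hT₃U, hT₃S, hT₃⟩ := press_code hnorm hlam0 e
    (Filter.inter_mem hT₂U (Filter.inter_mem hT₁U hBad))
    (fun x hx => (tw x hx.2.2).2.2) (fun x hx => h3 x hx.2.2)
  -- extract the fixed large set
  obtain ⟨x₀, hx₀⟩ := Ultrafilter.nonempty_of_mem hT₃U
  have hx₀' := hT₃S hx₀
  have hx₀Bad : ¬ Q x₀ := hx₀'.2.2
  have e₁ : (tw x₀ hx₀Bad).1 = A₁ := hT₁ x₀ hx₀Bad hx₀'.2.1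
  have e₂ : (tw x₀ hx₀Bad).2.1 = A₂ := hT₂ x₀ hx₀'.2 hx₀'.1
  have e₃ : (tw x₀ hx₀Bad).2.2 = A₃ := hT₃ x₀ hx₀' hx₀
  have hWD : sgn s₁ A₁ ∩ sgn s₂ A₂ ∩ sgn s₃ A₃ ∈ D := by
    have := h4 x₀ hx₀Bad
    rwa [e₁, e₂, e₃] at this
  obtain ⟨ξ, hξ⟩ := Ultrafilter.nonempty_of_mem hWD
  have hξlt : (ξ : Ordinal) < lam.ord := lt_of_lt_of_le ξ.2 (Cardinal.ord_le_ord.mpr hκlam)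
  obtain ⟨x, hx1, hx2⟩ := Ultrafilter.nonempty_of_mem
    (Filter.inter_mem hT₃U (hfine (ξ : Ordinal) hξlt))
  have hx' := hT₃S hx1
  have hxBad : ¬ Q x := hx'.2.2
  have f₁ : (tw x hxBad).1 = A₁ := hT₁ x hxBad hx'.2.1
  have f₂ : (tw x hxBad).2.1 = A₂ := hT₂ x hx'.2 hx'.1
  have f₃ : (tw x hxBad).2.2 = A₃ := hT₃ x hx' hx1
  refine h5 x hxBad ξ ?_ hx2
  rw [f₁, f₂, f₃]
  exact hξ

end Chunk3

section Chunk4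
open Cardinal Set
variable {κ lam : Cardinal.{0}} {U : Ultrafilter ↥(SmallSet κ lam)}

/-- generic pressing of an injectively-coded value -/
lemma press_val (hnorm : NormalUF κ lam U) (hlam0 : 0 < lam.ord)
    {β : Type*} (E : β → LamT lam) (hE : Function.Injective E)
    {S : Set ↥(SmallSet κ lam)} (hS : S ∈ U)
    (F : ∀ x : ↥(SmallSet κ lam), x ∈ S → β)
    (hF : ∀ (x : ↥(SmallSet κ lam)) (hx : x ∈ S), ((E (F x hx) : LamT lam) : Ordinal) ∈ (x : Set Ordinal)) :
    ∃ (b : β) (T : Set ↥(SmallSet κ lam)), T ∈ U ∧ T ⊆ S ∧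
      ∀ x (hx : x ∈ S), x ∈ T → F x hx = b := by
  obtain ⟨γ, hγ⟩ := LML.press hnorm hlam0 hS
    (fun x hx => ((E (F x hx) : LamT lam) : Ordinal)) (fun x hx => hF x hx)
  set T : Set ↥(SmallSet κ lam) :=
    {x | ∃ hx : x ∈ S, ((E (F x hx) : LamT lam) : Ordinal) = γ} ∩ S with hT
  have hTU : T ∈ U := Filter.inter_mem hγ hS
  obtain ⟨x₀, hx₀⟩ := Ultrafilter.nonempty_of_mem hTU
  have hx₀S : x₀ ∈ S := hx₀.2
  refine ⟨F x₀ hx₀S, T, hTU, Set.inter_subset_right, ?_⟩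
  intro x hx hxT
  obtain ⟨⟨hx', hval⟩, -⟩ := hxT
  obtain ⟨hx₀', hval₀⟩ := hx₀.1
  have h1 : ((E (F x hx) : LamT lam) : Ordinal) = γ := hval
  have h2 : ((E (F x₀ hx₀S) : LamT lam) : Ordinal) = γ := hval₀
  exact hE (Subtype.coe_injective (h1.trans h2.symm))

def CodedF (e' : (KT κ → KT κ) ≃ LamT lam) (x : ↥(SmallSet κ lam)) (G : KT κ → KT κ) : Prop :=
  ((e' G : LamT lam) : Ordinal) ∈ (x : Set Ordinal)

lemma codedF_ae (hfine : Fine κ lam U) (e' : (KT κ → KT κ) ≃ LamT lam) (G : KT κ → KT κ) :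
    {x : ↥(SmallSet κ lam) | CodedF e' x G} ∈ U :=
  hfine ((e' G : LamT lam) : Ordinal) (e' G).2

/-- a.e. every subset of `x ∩ κ` is the trace of a set coded in `x` -/
lemma total_ae (hnorm : NormalUF κ lam U) (hfine : Fine κ lam U)
    (hlam0 : 0 < lam.ord) (e : Set (KT κ) ≃ LamT lam) :
    {x : ↥(SmallSet κ lam) | ∀ B : Set (KT κ),
      (∀ ξ ∈ B, (ξ : Ordinal) ∈ (x : Set Ordinal)) →
      ∃ A : Set (KT κ), Coded e x A ∧
        ∀ ξ : KT κ, (ξ : Ordinal) ∈ (x : Set Ordinal) → (ξ ∈ A ↔ ξ ∈ B)} ∈ U := by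
  classical
  by_contra hcon
  set Bad : Set ↥(SmallSet κ lam) := {x | ¬ ∀ B : Set (KT κ),
      (∀ ξ ∈ B, (ξ : Ordinal) ∈ (x : Set Ordinal)) →
      ∃ A : Set (KT κ), Coded e x A ∧
        ∀ ξ : KT κ, (ξ : Ordinal) ∈ (x : Set Ordinal) → (ξ ∈ A ↔ ξ ∈ B)} with hBadDef
  have hBad : Bad ∈ U := by
    rw [hBadDef, ← Set.compl_setOf]
    exact (Ultrafilter.compl_mem_iff_notMem).2 hcon
  have hwit : ∀ x : ↥(SmallSet κ lam), x ∈ Bad → ∃ B : Set (KT κ),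
      (∀ ξ ∈ B, (ξ : Ordinal) ∈ (x : Set Ordinal)) ∧
      ∀ A : Set (KT κ), Coded e x A →
        ∃ ξ : KT κ, (ξ : Ordinal) ∈ (x : Set Ordinal) ∧ ¬ (ξ ∈ A ↔ ξ ∈ B) := by
    intro x hx
    simp only [hBadDef, Set.mem_setOf_eq] at hx
    push_neg at hx
    obtain ⟨B, h1, h2⟩ := hx
    refine ⟨B, h1, ?_⟩
    intro A hA
    obtain ⟨ξ, hξx, hd⟩ := h2 A hA
    refine ⟨ξ, hξx, ?_⟩
    intro hiff
    rcases hd with ⟨ha, hb⟩ | ⟨ha, hb⟩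
    · exact hb (hiff.mp ha)
    · exact ha (hiff.mpr hb)
  choose Bx hB1 hB2 using hwit
  set Bstar : Set (KT κ) :=
    {ξ : KT κ | {x : ↥(SmallSet κ lam) | ∃ h : x ∈ Bad, ξ ∈ Bx x h} ∈ U} with hBstar
  set X : Ordinal → Set ↥(SmallSet κ lam) := fun α =>
    {x | ∀ h : α < κ.ord, ∀ hb : x ∈ Bad, ((⟨α, h⟩ : KT κ) ∈ Bx x hb ↔ (⟨α, h⟩ : KT κ) ∈ Bstar)}
    with hX
  have hXU : ∀ α < lam.ord, X α ∈ U := by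
    intro α _
    by_cases hα : α < κ.ord
    · set ξ : KT κ := ⟨α, hα⟩ with hξdef
      by_cases hξ : ξ ∈ Bstar
      · refine Filter.mem_of_superset hξ ?_
        rintro x ⟨h, hmem⟩ h' hb
        constructor
        · intro _; exact hξ
        · intro _; exact hmem
      · have hcompl : {x : ↥(SmallSet κ lam) | ∃ h : x ∈ Bad, ξ ∈ Bx x h}ᶜ ∈ U :=
          (Ultrafilter.compl_mem_iff_notMem).2 hξ
        refine Filter.mem_of_superset hcompl ?_
        intro x hx h' hb
        constructor
        · intro hmem; exact absurd ⟨hb, hmem⟩ hx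
        · intro hmem; exact absurd hmem hξ
    · refine Filter.mem_of_superset Filter.univ_mem ?_
      intro x _ h'
      exact absurd h' hα
  have hdiag := LML.diag hnorm hlam0 X hXU
  obtain ⟨x, hx1, hx2, hx3⟩ := Ultrafilter.nonempty_of_mem
    (Filter.inter_mem hBad (Filter.inter_mem hdiag (coded_ae hfine e Bstar)))
  obtain ⟨ξ, hξx, hξiff⟩ := hB2 x hx1 Bstar hx3
  apply hξiff
  have hXξ := hx2 (ξ : Ordinal) hξx ξ.2 hx1
  have : ((⟨(ξ : Ordinal), ξ.2⟩ : KT κ) : KT κ) = ξ := Subtype.ext rfl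
  rw [this] at hXξ
  exact hXξ.symm

/-- a.e. every function `x ∩ κ → x ∩ κ` is the restriction of a function coded in `x` -/
lemma ftotal_ae (hnorm : NormalUF κ lam U) (hfine : Fine κ lam U)
    (hκlam : κ ≤ lam) (hlam0 : 0 < lam.ord) (e' : (KT κ → KT κ) ≃ LamT lam) :
    {x : ↥(SmallSet κ lam) | ∀ g : KT κ → KT κ,
      (∀ ξ : KT κ, (ξ : Ordinal) ∈ (x : Set Ordinal) → ((g ξ : Ordinal) ∈ (x : Set Ordinal))) →
      ∃ G : KT κ → KT κ, CodedF e' x G ∧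
        ∀ ξ : KT κ, (ξ : Ordinal) ∈ (x : Set Ordinal) → G ξ = g ξ} ∈ U := by
  classical
  by_contra hcon
  set Bad : Set ↥(SmallSet κ lam) := {x | ¬ ∀ g : KT κ → KT κ,
      (∀ ξ : KT κ, (ξ : Ordinal) ∈ (x : Set Ordinal) → ((g ξ : Ordinal) ∈ (x : Set Ordinal))) →
      ∃ G : KT κ → KT κ, CodedF e' x G ∧
        ∀ ξ : KT κ, (ξ : Ordinal) ∈ (x : Set Ordinal) → G ξ = g ξ} with hBadDef
  have hBad : Bad ∈ U := by
    rw [hBadDef, ← Set.compl_setOf]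
    exact (Ultrafilter.compl_mem_iff_notMem).2 hcon
  have hwit : ∀ x : ↥(SmallSet κ lam), x ∈ Bad → ∃ g : KT κ → KT κ,
      (∀ ξ : KT κ, (ξ : Ordinal) ∈ (x : Set Ordinal) → ((g ξ : Ordinal) ∈ (x : Set Ordinal))) ∧
      ∀ G : KT κ → KT κ, CodedF e' x G →
        ∃ ξ : KT κ, (ξ : Ordinal) ∈ (x : Set Ordinal) ∧ G ξ ≠ g ξ := by
    intro x hx
    simp only [hBadDef, Set.mem_setOf_eq] at hx
    push_neg at hx
    obtain ⟨g, h1, h2⟩ := hx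
    exact ⟨g, h1, h2⟩
  choose gx hg1 hg2 using hwit
  have hκord : κ.ord ≤ lam.ord := Cardinal.ord_le_ord.mpr hκlam
  have key : ∀ ξ : KT κ, ∃ η : Ordinal,
      {x : ↥(SmallSet κ lam) | ∃ hx : x ∈ Bad ∩ {x | (ξ : Ordinal) ∈ (x : Set Ordinal)},
        ((gx x hx.1 ξ : KT κ) : Ordinal) = η} ∈ U := by
    intro ξ
    have hSU : Bad ∩ {x : ↥(SmallSet κ lam) | (ξ : Ordinal) ∈ (x : Set Ordinal)} ∈ U :=
      Filter.inter_mem hBad (hfine (ξ : Ordinal) (lt_of_lt_of_le ξ.2 hκord))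
    exact LML.press hnorm hlam0 hSU
      (fun x hx => ((gx x hx.1 ξ : KT κ) : Ordinal))
      (fun x hx => hg1 x hx.1 ξ hx.2)
  choose η hη using key
  have hηκ : ∀ ξ : KT κ, η ξ < κ.ord := by
    intro ξ
    obtain ⟨x, hx, heq⟩ := Ultrafilter.nonempty_of_mem (hη ξ)
    exact heq ▸ (gx x hx.1 ξ).2
  set Gstar : KT κ → KT κ := fun ξ => ⟨η ξ, hηκ ξ⟩ with hGstar
  set X : Ordinal → Set ↥(SmallSet κ lam) := fun α =>
    {x | ∀ h : α < κ.ord, ∀ hb : x ∈ Bad, gx x hb ⟨α, h⟩ = Gstar ⟨α, h⟩} with hX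
  have hXU : ∀ α < lam.ord, X α ∈ U := by
    intro α hαlam
    by_cases hα : α < κ.ord
    · set ξ : KT κ := ⟨α, hα⟩ with hξdef
      refine Filter.mem_of_superset (hη ξ) ?_
      rintro x ⟨hx, hval⟩ h' hb
      apply Subtype.ext
      exact hval
    · refine Filter.mem_of_superset Filter.univ_mem ?_
      intro x _ h'
      exact absurd h' hα
  have hdiag := LML.diag hnorm hlam0 X hXU
  obtain ⟨x, hx1, hx2, hx3⟩ := Ultrafilter.nonempty_of_mem
    (Filter.inter_mem hBad (Filter.inter_mem hdiag (codedF_ae hfine e' Gstar)))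
  obtain ⟨ξ, hξx, hξne⟩ := hg2 x hx1 Gstar hx3
  apply hξne
  have hXξ := hx2 (ξ : Ordinal) hξx ξ.2 hx1
  have hξeta : ((⟨(ξ : Ordinal), ξ.2⟩ : KT κ) : KT κ) = ξ := Subtype.ext rfl
  rw [hξeta] at hXξ
  exact hXξ.symm
end Chunk4

section Chunk5
open Cardinal Set
variable {κ lam : Cardinal.{0}} {U : Ultrafilter ↥(SmallSet κ lam)}

/-- embedding of `κ`-ordinals into `λ`-ordinals -/
def incl (hκlam : κ ≤ lam) : KT κ → LamT lam :=
  fun ξ => ⟨(ξ : Ordinal), lt_of_lt_of_le ξ.2 (Cardinal.ord_le_ord.mpr hκlam)⟩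

lemma incl_inj (hκlam : κ ≤ lam) : Function.Injective (incl (lam := lam) hκlam) := by
  intro a b h
  apply Subtype.ext
  exact congrArg (fun z : LamT lam => (z : Ordinal)) h

/-- a.e., `D`-large sets coded in `x` contain a non-fixed point of `x ∩ κ` -/
lemma nonpr_ae (hnorm : NormalUF κ lam U) (hfine : Fine κ lam U)
    (hκlam : κ ≤ lam) (hlam0 : 0 < lam.ord)
    (e : Set (KT κ) ≃ LamT lam) (D : Ultrafilter (KT κ)) (hDn : Nonprincipal D) :
    {x : ↥(SmallSet κ lam) | ∀ A : Set (KT κ), Coded e x A → A ∈ D →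
      ∀ b : KT κ, (b : Ordinal) ∈ (x : Set Ordinal) →
      ∃ ξ : KT κ, ξ ∈ A ∧ (ξ : Ordinal) ∈ (x : Set Ordinal) ∧ ξ ≠ b} ∈ U := by
  classical
  by_contra hcon
  set Bad : Set ↥(SmallSet κ lam) := {x | ¬ ∀ A : Set (KT κ), Coded e x A → A ∈ D →
      ∀ b : KT κ, (b : Ordinal) ∈ (x : Set Ordinal) →
      ∃ ξ : KT κ, ξ ∈ A ∧ (ξ : Ordinal) ∈ (x : Set Ordinal) ∧ ξ ≠ b} with hBadDef
  have hBad : Bad ∈ U := by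
    rw [hBadDef, ← Set.compl_setOf]; exact (Ultrafilter.compl_mem_iff_notMem).2 hcon
  have hwit : ∀ x : ↥(SmallSet κ lam), x ∈ Bad → ∃ p : Set (KT κ) × KT κ,
      Coded e x p.1 ∧ p.1 ∈ D ∧ ((p.2 : Ordinal) ∈ (x : Set Ordinal)) ∧
      ∀ ξ : KT κ, ξ ∈ p.1 → (ξ : Ordinal) ∈ (x : Set Ordinal) → ξ = p.2 := by
    intro x hx
    simp only [hBadDef, Set.mem_setOf_eq] at hx
    push_neg at hx
    obtain ⟨A, h1, h2, b, h3, h4⟩ := hx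
    exact ⟨⟨A, b⟩, h1, h2, h3, fun ξ hξA hξx => by
      by_contra hne
      exact hne (by
        have := h4 ξ hξA hξx
        exact this)⟩
  choose pw h1 h2 h3 h4 using hwit
  obtain ⟨A₀, T₁, hT₁U, hT₁S, hT₁⟩ := press_val hnorm hlam0 (fun A => e A) e.injective hBad
    (fun x hx => (pw x hx).1) h1
  obtain ⟨b₀, T₂, hT₂U, hT₂S, hT₂⟩ := press_val hnorm hlam0 (incl hκlam) (incl_inj hκlam)
    (Filter.inter_mem hT₁U hBad) (fun x hx => (pw x hx.2).2) (fun x hx => h3 x hx.2)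
  have hA₀D : A₀ ∈ D := by
    obtain ⟨x, hx⟩ := Ultrafilter.nonempty_of_mem hT₁U
    have hb : x ∈ Bad := hT₁S hx
    exact hT₁ x hb hx ▸ h2 x hb
  have hsing : ({b₀} : Set (KT κ)) ∉ D := hDn b₀
  have hcompl : ({b₀} : Set (KT κ))ᶜ ∈ D := (Ultrafilter.compl_mem_iff_notMem).2 hsing
  obtain ⟨ξ, hξA, hξne⟩ := Ultrafilter.nonempty_of_mem (Filter.inter_mem hA₀D hcompl)
  have hξlt : (ξ : Ordinal) < lam.ord := lt_of_lt_of_le ξ.2 (Cardinal.ord_le_ord.mpr hκlam)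
  obtain ⟨x, hx2, hx1⟩ := Ultrafilter.nonempty_of_mem
    (Filter.inter_mem hT₂U (hfine (ξ : Ordinal) hξlt))
  have hxT := hT₂S hx2
  have hxBad : x ∈ Bad := hxT.2
  have e₁ : (pw x hxBad).1 = A₀ := hT₁ x hxBad hxT.1
  have e₂ : (pw x hxBad).2 = b₀ := hT₂ x hxT hx2
  have := h4 x hxBad ξ (e₁ ▸ hξA) hx1
  rw [e₂] at this
  exact hξne this

/-- a.e., every coded function bounded on `x ∩ κ` has a `D`-large fiber coded in `x` -/
lemma part_ae (hnorm : NormalUF κ lam U) (hfine : Fine κ lam U)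
    (hκlam : κ ≤ lam) (hlam0 : 0 < lam.ord) (hκ0 : (0 : Ordinal) < κ.ord)
    (e : Set (KT κ) ≃ LamT lam) (e' : (KT κ → KT κ) ≃ LamT lam)
    (D : Ultrafilter (KT κ)) (hD : KComplete κ D) :
    {x : ↥(SmallSet κ lam) | ∀ G : KT κ → KT κ, CodedF e' x G →
      ∀ β : KT κ, (β : Ordinal) ∈ (x : Set Ordinal) →
      (∀ ξ : KT κ, (ξ : Ordinal) ∈ (x : Set Ordinal) → (G ξ : Ordinal) < (β : Ordinal)) →
      ∃ (η : KT κ) (A : Set (KT κ)), (η : Ordinal) < (β : Ordinal) ∧ Coded e x A ∧ A ∈ D ∧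
        ∀ ξ : KT κ, (ξ : Ordinal) ∈ (x : Set Ordinal) → (ξ ∈ A ↔ G ξ = η)} ∈ U := by
  classical
  by_contra hcon
  set Bad : Set ↥(SmallSet κ lam) := {x | ¬ ∀ G : KT κ → KT κ, CodedF e' x G →
      ∀ β : KT κ, (β : Ordinal) ∈ (x : Set Ordinal) →
      (∀ ξ : KT κ, (ξ : Ordinal) ∈ (x : Set Ordinal) → (G ξ : Ordinal) < (β : Ordinal)) →
      ∃ (η : KT κ) (A : Set (KT κ)), (η : Ordinal) < (β : Ordinal) ∧ Coded e x A ∧ A ∈ D ∧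
        ∀ ξ : KT κ, (ξ : Ordinal) ∈ (x : Set Ordinal) → (ξ ∈ A ↔ G ξ = η)} with hBadDef
  have hBad : Bad ∈ U := by
    rw [hBadDef, ← Set.compl_setOf]; exact (Ultrafilter.compl_mem_iff_notMem).2 hcon
  have hwit : ∀ x : ↥(SmallSet κ lam), x ∈ Bad → ∃ p : (KT κ → KT κ) × KT κ,
      CodedF e' x p.1 ∧ ((p.2 : Ordinal) ∈ (x : Set Ordinal)) ∧
      (∀ ξ : KT κ, (ξ : Ordinal) ∈ (x : Set Ordinal) → (p.1 ξ : Ordinal) < (p.2 : Ordinal)) ∧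
      ∀ (η : KT κ) (A : Set (KT κ)), (η : Ordinal) < (p.2 : Ordinal) → Coded e x A → A ∈ D →
        ∃ ξ : KT κ, (ξ : Ordinal) ∈ (x : Set Ordinal) ∧ ¬ (ξ ∈ A ↔ p.1 ξ = η) := by
    intro x hx
    simp only [hBadDef, Set.mem_setOf_eq] at hx
    push_neg at hx
    obtain ⟨G, h1, β, h2, h3, h4⟩ := hx
    refine ⟨⟨G, β⟩, h1, h2, h3, ?_⟩
    intro η A hη hA hAD
    obtain ⟨ξ, hξx, hd⟩ := h4 η A hη hA hAD
    refine ⟨ξ, hξx, ?_⟩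
    intro hiff
    rcases hd with ⟨ha, hb⟩ | ⟨ha, hb⟩
    · exact hb (hiff.mp ha)
    · exact ha (hiff.mpr hb)
  choose pw h1 h2 h3 h4 using hwit
  obtain ⟨G, T₁, hT₁U, hT₁S, hT₁⟩ := press_val hnorm hlam0 (fun g => e' g) e'.injective hBad
    (fun x hx => (pw x hx).1) h1
  obtain ⟨β, T₂, hT₂U, hT₂S, hT₂⟩ := press_val hnorm hlam0 (incl hκlam) (incl_inj hκlam)
    (Filter.inter_mem hT₁U hBad) (fun x hx => (pw x hx.2).2) (fun x hx => h2 x hx.2)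
  -- 0 < β
  have h0lam : (0 : Ordinal) < lam.ord := hlam0
  obtain ⟨x₁, hx₁T, hx₁0⟩ := Ultrafilter.nonempty_of_mem
    (Filter.inter_mem hT₂U (hfine (0 : Ordinal) h0lam))
  have hx₁T' := hT₂S hx₁T
  have hx₁Bad : x₁ ∈ Bad := hx₁T'.2
  have eG₁ : (pw x₁ hx₁Bad).1 = G := hT₁ x₁ hx₁Bad hx₁T'.1
  have eβ₁ : (pw x₁ hx₁Bad).2 = β := hT₂ x₁ hx₁T' hx₁T
  have hβ0 : (0 : Ordinal) < (β : Ordinal) := by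
    have := h3 x₁ hx₁Bad ⟨0, hκ0⟩ hx₁0
    rw [eβ₁] at this
    exact lt_of_le_of_lt zero_le this
  -- truncation of G
  set G' : KT κ → KT κ := fun ξ => if (G ξ : Ordinal) < (β : Ordinal) then G ξ else ⟨0, hκ0⟩
    with hG'
  have hG'lt : ∀ ξ : KT κ, (G' ξ : Ordinal) < (β : Ordinal) := by
    intro ξ
    by_cases h : (G ξ : Ordinal) < (β : Ordinal)
    · simp only [hG']; rw [if_pos h]; exact h
    · simp only [hG']; rw [if_neg h]; exact hβ0
  -- a D-large fiber
  have hfiber : ∃ η : KT κ, (η : Ordinal) < (β : Ordinal) ∧ G' ⁻¹' {η} ∈ D := by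
    by_contra hc
    push_neg at hc
    have hcompl : ∀ η : ↥(Iio (β : Ordinal) : Set Ordinal.{0}),
        (G' ⁻¹' {(⟨(η : Ordinal), Set.mem_Iio.mpr
          (lt_trans (Set.mem_Iio.mp η.2) (Set.mem_Iio.mp β.2))⟩ : KT κ)})ᶜ ∈ D := by
      intro η
      apply (Ultrafilter.compl_mem_iff_notMem).2
      intro hmem
      exact hc ⟨(η : Ordinal), Set.mem_Iio.mpr
        (lt_trans (Set.mem_Iio.mp η.2) (Set.mem_Iio.mp β.2))⟩ (Set.mem_Iio.mp η.2) hmem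
    have hint := LML.kcomplete_iInter hD _ (by
      rw [Ordinal.mk_Iio_ordinal, Cardinal.lift_lt]
      exact Cardinal.lt_ord.mp β.2) hcompl
    obtain ⟨ξ, hξ⟩ := Ultrafilter.nonempty_of_mem hint
    have hm := Set.mem_iInter.mp hξ ⟨(G' ξ : Ordinal), hG'lt ξ⟩
    exact hm rfl
  obtain ⟨η₀, hη₀β, hη₀D⟩ := hfiber
  -- final contradiction
  obtain ⟨x, hxT, hxcode⟩ := Ultrafilter.nonempty_of_mem
    (Filter.inter_mem hT₂U (coded_ae hfine e (G' ⁻¹' {η₀})))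
  have hxT' := hT₂S hxT
  have hxBad : x ∈ Bad := hxT'.2
  have eG : (pw x hxBad).1 = G := hT₁ x hxBad hxT'.1
  have eβ : (pw x hxBad).2 = β := hT₂ x hxT' hxT
  have hbound : ∀ ξ : KT κ, (ξ : Ordinal) ∈ (x : Set Ordinal) →
      (G ξ : Ordinal) < (β : Ordinal) := by
    intro ξ hξ
    have := h3 x hxBad ξ hξ
    rwa [eG, eβ] at this
  obtain ⟨ξ, hξx, hξbad⟩ := h4 x hxBad η₀ (G' ⁻¹' {η₀}) (eβ ▸ hη₀β) hxcode hη₀D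
  apply hξbad
  rw [eG]
  constructor
  · intro hmem
    have : G' ξ = η₀ := hmem
    rw [hG'] at this
    simp only [hbound ξ hξx, if_true] at this
    exact this
  · intro heq
    have : G' ξ = η₀ := by
      rw [hG']
      simp only [hbound ξ hξx, if_true]
      exact heq
    exact this

/-- a.e., supercompact cardinals are unbounded in `x ∩ κ` -/
lemma sc_ae (hnorm : NormalUF κ lam U) (hfine : Fine κ lam U)
    (hκlam : κ ≤ lam) (hlam0 : 0 < lam.ord)
    (hub : ∀ α < κ, ∃ δ : Cardinal.{0}, α < δ ∧ δ < κ ∧ IsSupercompactCard δ) :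
    {x : ↥(SmallSet κ lam) | ∀ β : Ordinal, β ∈ (x : Set Ordinal) → β < κ.ord →
      ∃ ρ : Cardinal.{0}, IsSupercompactCard ρ ∧ ρ < κ ∧ β < ρ.ord ∧
        ρ.ord ∈ (x : Set Ordinal)} ∈ U := by
  classical
  by_contra hcon
  set Bad : Set ↥(SmallSet κ lam) := {x | ¬ ∀ β : Ordinal, β ∈ (x : Set Ordinal) → β < κ.ord →
      ∃ ρ : Cardinal.{0}, IsSupercompactCard ρ ∧ ρ < κ ∧ β < ρ.ord ∧
        ρ.ord ∈ (x : Set Ordinal)} with hBadDef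
  have hBad : Bad ∈ U := by
    rw [hBadDef, ← Set.compl_setOf]; exact (Ultrafilter.compl_mem_iff_notMem).2 hcon
  have hwit : ∀ x : ↥(SmallSet κ lam), x ∈ Bad → ∃ β : Ordinal,
      β ∈ (x : Set Ordinal) ∧ β < κ.ord ∧
      ∀ ρ : Cardinal.{0}, IsSupercompactCard ρ → ρ < κ → β < ρ.ord →
        ρ.ord ∉ (x : Set Ordinal) := by
    intro x hx
    simp only [hBadDef, Set.mem_setOf_eq] at hx
    push_neg at hx
    obtain ⟨β, h1, h2, h3⟩ := hx
    exact ⟨β, h1, h2, fun ρ hρ hρκ hβρ => h3 ρ hρ hρκ hβρ⟩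
  choose βx hb1 hb2 hb3 using hwit
  obtain ⟨β₀, hβ₀⟩ := LML.press hnorm hlam0 hBad βx hb1
  have hβ₀κ : β₀ < κ.ord := by
    obtain ⟨x, hx, heq⟩ := Ultrafilter.nonempty_of_mem hβ₀
    exact heq ▸ hb2 x hx
  obtain ⟨ρ, hρ1, hρ2, hρsc⟩ := hub β₀.card (Cardinal.lt_ord.mp hβ₀κ)
  have hβρ : β₀ < ρ.ord := Cardinal.lt_ord.mpr hρ1
  have hρlam : ρ.ord < lam.ord := lt_of_lt_of_le (Cardinal.ord_lt_ord.mpr hρ2)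
    (Cardinal.ord_le_ord.mpr hκlam)
  obtain ⟨x, hx1, hx2⟩ := Ultrafilter.nonempty_of_mem
    (Filter.inter_mem hβ₀ (hfine ρ.ord hρlam))
  obtain ⟨hxBad, heq⟩ := hx1
  exact hb3 x hxBad ρ hρsc hρ2 (heq ▸ hβρ) hx2
end Chunk5

section Chunk6
open Cardinal Set

/-- embedding of the ordinals below `γ` into those below `κ.ord` -/
def embT {κ : Cardinal.{0}} {γ : Ordinal.{0}} (hγκ : γ < κ.ord) :
    ↥(Iio γ : Set Ordinal.{0}) → KT κ :=
  fun ζ => ⟨(ζ : Ordinal), Set.mem_Iio.mpr (lt_trans (Set.mem_Iio.mp ζ.2) hγκ)⟩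

lemma embT_inj {κ : Cardinal.{0}} {γ : Ordinal.{0}} (hγκ : γ < κ.ord) :
    Function.Injective (embT (κ := κ) hγκ) := by
  intro a b h
  apply Subtype.ext
  exact congrArg (fun z : KT κ => (z : Ordinal)) h

def resT {κ : Cardinal.{0}} {γ : Ordinal.{0}} (hγκ : γ < κ.ord) (A : Set (KT κ)) :
    Set ↥(Iio γ : Set Ordinal.{0}) := {ζ | embT hγκ ζ ∈ A}

/-- The main lemma: a `2^κ`-supercompact measurable limit of supercompacts reflects. -/
theorem exists_smaller (κ : Cardinal.{0}) (hmeas : IsMeasurableCard κ)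
    (hub : ∀ α < κ, ∃ δ : Cardinal.{0}, α < δ ∧ δ < κ ∧ IsSupercompactCard δ)
    (hsc : IsSupercompactTo κ (2 ^ κ)) :
    ∃ δ : Cardinal.{0}, δ < κ ∧ IsMeasurableCard δ ∧
      ∀ α < δ, ∃ ρ : Cardinal.{0}, α < ρ ∧ ρ < δ ∧ IsSupercompactCard ρ := by
  classical
  obtain ⟨hκℵ, D, hD, hDn⟩ := hmeas
  obtain ⟨U, hcomp, hnorm, hfine⟩ := hsc
  set lam : Cardinal.{0} := 2 ^ κ with hlamdef
  have hκlam : κ ≤ lam := (Cardinal.cantor κ).le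
  have hκ0 : (0 : Ordinal) < κ.ord := by
    rw [Cardinal.lt_ord, Ordinal.card_zero]
    exact lt_trans Cardinal.aleph0_pos hκℵ
  have hlam0 : (0 : Ordinal) < lam.ord := lt_of_lt_of_le hκ0 (Cardinal.ord_le_ord.mpr hκlam)
  obtain ⟨e⟩ := exists_code (κ := κ) (lam := lam) le_rfl le_rfl
  obtain ⟨e'⟩ := exists_fcode (κ := κ) (lam := lam) le_rfl le_rfl hκℵ.le
  -- the fixed supercompact above ℵ₀
  obtain ⟨ρ₀, hρ₀1, hρ₀2, -⟩ := hub ℵ₀ hκℵ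
  have hρ₀lam : ρ₀.ord < lam.ord :=
    lt_of_lt_of_le (Cardinal.ord_lt_ord.mpr hρ₀2) (Cardinal.ord_le_ord.mpr hκlam)
  -- the large set of reflecting points
  have hbig := Filter.inter_mem (good_mem hnorm hfine hcomp hκlam hlam0)
    (Filter.inter_mem (core hnorm hfine hκlam hlam0 e D true true false)
    (Filter.inter_mem (core hnorm hfine hκlam hlam0 e D false false false)
    (Filter.inter_mem (core hnorm hfine hκlam hlam0 e D true true true)
    (Filter.inter_mem (total_ae hnorm hfine hlam0 e)
    (Filter.inter_mem (ftotal_ae hnorm hfine hκlam hlam0 e')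
    (Filter.inter_mem (part_ae hnorm hfine hκlam hlam0 hκ0 e e' D hD)
    (Filter.inter_mem (nonpr_ae hnorm hfine hκlam hlam0 e D hDn)
    (Filter.inter_mem (sc_ae hnorm hfine hκlam hlam0 hub)
    (Filter.inter_mem (hfine ρ₀.ord hρ₀lam)
      (coded_ae hfine e Set.univ))))))))))
  obtain ⟨x, hxDC, hTTF, hFFF, hTTT, hTot, hFtot, hPart, hNonpr, hSc, hρ0x, hUc⟩ :=
    Ultrafilter.nonempty_of_mem hbig
  -- basic facts about γ = x ∩ κ
  set γ : Ordinal.{0} := gam κ (x : Set Ordinal) with hγdef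
  have hγκ : γ < κ.ord := gamma_lt hxDC
  have memiff : ∀ β : Ordinal, β < κ.ord → (β ∈ (x : Set Ordinal) ↔ β < γ) :=
    fun β hβ => mem_iff_lt_gamma hxDC hβ
  have hρ₀γ : ρ₀.ord < γ :=
    (memiff ρ₀.ord (Cardinal.ord_lt_ord.mpr hρ₀2)).mp hρ0x
  have h0γ : (0 : Ordinal) < γ := lt_of_le_of_lt zero_le hρ₀γ
  -- supercompacts are unbounded below γ
  have scγ : ∀ β < γ, ∃ ρ : Cardinal.{0}, IsSupercompactCard ρ ∧ β < ρ.ord ∧ ρ.ord < γ := by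
    intro β hβ
    have hβκ : β < κ.ord := lt_trans hβ hγκ
    obtain ⟨ρ, hsc', hρκ, hβρ, hρx⟩ := hSc β ((memiff β hβκ).mpr hβ) hβκ
    exact ⟨ρ, hsc', hβρ, (memiff ρ.ord (Cardinal.ord_lt_ord.mpr hρκ)).mp hρx⟩
  -- γ is a cardinal's ordinal
  set δ : Cardinal.{0} := γ.card with hδdef
  have hcardlt : ∀ β < γ, β.card < δ := by
    intro β hβ
    obtain ⟨ρ, -, hβρ, hργ⟩ := scγ β hβ
    have h1 : β.card < ρ := Cardinal.lt_ord.mp hβρ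
    have h2 : ρ ≤ δ := by
      have := Ordinal.card_le_card (le_of_lt hργ)
      rwa [Cardinal.card_ord] at this
    exact lt_of_lt_of_le h1 h2
  have hcard : δ.ord = γ := by
    rcases lt_or_eq_of_le (Cardinal.ord_card_le γ) with h | h
    · exfalso
      have := hcardlt δ.ord h
      rw [Cardinal.card_ord] at this
      exact lt_irrefl _ this
    · exact h
  have hδκ : δ < κ := Cardinal.lt_ord.mp hγκ
  have hδℵ : ℵ₀ < δ := by
    have h1 : ℵ₀ < ρ₀ := hρ₀1
    have h2 : ρ₀ ≤ δ := by
      have := Ordinal.card_le_card (le_of_lt hρ₀γ)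
      rwa [Cardinal.card_ord] at this
    exact lt_of_lt_of_le h1 h2
  have hδ0 : (0 : Ordinal) < δ.ord := by rw [hcard]; exact h0γ
  -- limit-of-supercompacts property of δ
  have hlimitsc : ∀ α < δ, ∃ ρ : Cardinal.{0}, α < ρ ∧ ρ < δ ∧ IsSupercompactCard ρ := by
    intro α hα
    have hαγ : α.ord < γ := by rw [← hcard]; exact Cardinal.ord_lt_ord.mpr hα
    obtain ⟨ρ, hsc', h1, h2⟩ := scγ α.ord hαγ
    refine ⟨ρ, Cardinal.ord_lt_ord.mp h1, ?_, hsc'⟩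
    rw [← Cardinal.ord_lt_ord, hcard]
    exact h2
  -- membership translation
  have memmp : ∀ ξ : KT κ, (ξ : Ordinal) ∈ (x : Set Ordinal) → (ξ : Ordinal) < γ :=
    fun ξ h => (memiff _ (Set.mem_Iio.mp ξ.2)).mp h
  have memmpr : ∀ ξ : KT κ, (ξ : Ordinal) < γ → (ξ : Ordinal) ∈ (x : Set Ordinal) :=
    fun ξ h => (memiff _ (Set.mem_Iio.mp ξ.2)).mpr h
  have embmem : ∀ ζ : ↥(Iio γ : Set Ordinal.{0}),
      ((embT hγκ ζ : KT κ) : Ordinal) ∈ (x : Set Ordinal) :=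
    fun ζ => memmpr _ (Set.mem_Iio.mp ζ.2)
  -- the derived filter
  set InV : Set ↥(Iio γ : Set Ordinal.{0}) → Prop :=
    fun B => ∃ A : Set (KT κ), Coded e x A ∧ A ∈ D ∧ resT hγκ A = B with hInV
  -- every subset of γ has a code
  have getcode : ∀ B : Set ↥(Iio γ : Set Ordinal.{0}),
      ∃ A : Set (KT κ), Coded e x A ∧ resT hγκ A = B := by
    intro B
    set upB : Set (KT κ) := {ξ : KT κ | ∃ h : (ξ : Ordinal) < γ,
      (⟨(ξ : Ordinal), Set.mem_Iio.mpr h⟩ : ↥(Iio γ : Set Ordinal.{0})) ∈ B} with hupB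
    obtain ⟨A, hA1, hA2⟩ := hTot upB (fun ξ hξ => memmpr ξ hξ.choose)
    refine ⟨A, hA1, ?_⟩
    ext ζ
    constructor
    · intro hζ
      have h1 := (hA2 (embT hγκ ζ) (embmem ζ)).mp hζ
      obtain ⟨h, hmem⟩ := h1
      have : (⟨((embT hγκ ζ : KT κ) : Ordinal), Set.mem_Iio.mpr h⟩ :
          ↥(Iio γ : Set Ordinal.{0})) = ζ := Subtype.ext rfl
      rwa [this] at hmem
    · intro hζ
      apply (hA2 (embT hγκ ζ) (embmem ζ)).mpr
      refine ⟨Set.mem_Iio.mp ζ.2, ?_⟩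
      have : (⟨((embT hγκ ζ : KT κ) : Ordinal), Set.mem_Iio.mpr (Set.mem_Iio.mp ζ.2)⟩ :
          ↥(Iio γ : Set Ordinal.{0})) = ζ := Subtype.ext rfl
      rwa [this]
  -- properness
  have hproper : ¬ InV ∅ := by
    rintro ⟨A, hc, hd, hres⟩
    have hDmem : sgn true A ∩ sgn true A ∩ sgn true A ∈ D := by
      show A ∩ A ∩ A ∈ D
      simpa using hd
    obtain ⟨ξ, hξmem, hξx⟩ := hTTT A A A hc hc hc hDmem
    have hζ : (⟨(ξ : Ordinal), Set.mem_Iio.mpr (memmp ξ hξx)⟩ :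
        ↥(Iio γ : Set Ordinal.{0})) ∈ resT hγκ A := by
      show embT hγκ _ ∈ A
      have : embT hγκ (⟨(ξ : Ordinal), Set.mem_Iio.mpr (memmp ξ hξx)⟩ :
          ↥(Iio γ : Set Ordinal.{0})) = ξ := Subtype.ext rfl
      rw [this]
      exact hξmem.1.1
    rw [hres] at hζ
    exact hζ
  -- upward closure / intersections via the (t,t,f) core
  have hkey : ∀ (A₁ A₂ A₃ : Set (KT κ)), Coded e x A₁ → Coded e x A₂ → Coded e x A₃ →
      A₁ ∈ D → A₂ ∈ D → resT hγκ A₁ ∩ resT hγκ A₂ ⊆ resT hγκ A₃ → A₃ ∈ D := by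
    intro A₁ A₂ A₃ hc1 hc2 hc3 hd1 hd2 hsub
    by_contra hnd
    have hd3 : A₃ᶜ ∈ D := (Ultrafilter.compl_mem_iff_notMem).2 hnd
    have hDmem : sgn true A₁ ∩ sgn true A₂ ∩ sgn false A₃ ∈ D := by
      show A₁ ∩ A₂ ∩ A₃ᶜ ∈ D
      exact Filter.inter_mem (Filter.inter_mem hd1 hd2) hd3
    obtain ⟨ξ, hξmem, hξx⟩ := hTTF A₁ A₂ A₃ hc1 hc2 hc3 hDmem
    set ζ : ↥(Iio γ : Set Ordinal.{0}) := ⟨(ξ : Ordinal), Set.mem_Iio.mpr (memmp ξ hξx)⟩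
      with hζdef
    have hembζ : embT hγκ ζ = ξ := Subtype.ext rfl
    have h1 : ζ ∈ resT hγκ A₁ := by show embT hγκ ζ ∈ A₁; rw [hembζ]; exact hξmem.1.1
    have h2 : ζ ∈ resT hγκ A₂ := by show embT hγκ ζ ∈ A₂; rw [hembζ]; exact hξmem.1.2
    have h3 := hsub ⟨h1, h2⟩
    have : embT hγκ ζ ∈ A₃ := h3
    rw [hembζ] at this
    exact hξmem.2 this
  have hVmono : ∀ B₁ B₂ : Set ↥(Iio γ : Set Ordinal.{0}), InV B₁ → B₁ ⊆ B₂ → InV B₂ := by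
    rintro B₁ B₂ ⟨A₁, hc1, hd1, hr1⟩ hsub
    obtain ⟨A₂, hc2, hr2⟩ := getcode B₂
    refine ⟨A₂, hc2, ?_, hr2⟩
    apply hkey A₁ A₁ A₂ hc1 hc1 hc2 hd1 hd1
    rw [hr1, hr2]
    intro ζ hζ
    exact hsub hζ.1
  have hVinter : ∀ B₁ B₂ : Set ↥(Iio γ : Set Ordinal.{0}), InV B₁ → InV B₂ → InV (B₁ ∩ B₂) := by
    rintro B₁ B₂ ⟨A₁, hc1, hd1, hr1⟩ ⟨A₂, hc2, hd2, hr2⟩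
    obtain ⟨A₃, hc3, hr3⟩ := getcode (B₁ ∩ B₂)
    refine ⟨A₃, hc3, ?_, hr3⟩
    apply hkey A₁ A₂ A₃ hc1 hc2 hc3 hd1 hd2
    rw [hr1, hr2, hr3]
  have hVuniv : InV Set.univ := ⟨Set.univ, hUc, Filter.univ_mem, by
    ext ζ; simp [resT]⟩
  -- ultra
  have hVultra : ∀ B : Set ↥(Iio γ : Set Ordinal.{0}), ¬ InV B → InV Bᶜ := by
    intro B hnB
    obtain ⟨A, hcA, hrA⟩ := getcode B
    obtain ⟨A', hcA', hrA'⟩ := getcode Bᶜ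
    have hAnd : A ∉ D := fun hd => hnB ⟨A, hcA, hd, hrA⟩
    have hAc : Aᶜ ∈ D := (Ultrafilter.compl_mem_iff_notMem).2 hAnd
    by_contra hnB'
    have hA'nd : A' ∉ D := fun hd => hnB' ⟨A', hcA', hd, hrA'⟩
    have hA'c : A'ᶜ ∈ D := (Ultrafilter.compl_mem_iff_notMem).2 hA'nd
    have hDmem : sgn false A ∩ sgn false A' ∩ sgn false A' ∈ D := by
      show Aᶜ ∩ A'ᶜ ∩ A'ᶜ ∈ D
      exact Filter.inter_mem (Filter.inter_mem hAc hA'c) hA'c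
    obtain ⟨ξ, hξmem, hξx⟩ := hFFF A A' A' hcA hcA' hcA' hDmem
    set ζ : ↥(Iio γ : Set Ordinal.{0}) := ⟨(ξ : Ordinal), Set.mem_Iio.mpr (memmp ξ hξx)⟩
      with hζdef
    have hembζ : embT hγκ ζ = ξ := Subtype.ext rfl
    have h1 : ζ ∉ B := by
      rw [← hrA]
      show embT hγκ ζ ∉ A
      rw [hembζ]
      exact hξmem.1.1
    have h2 : ζ ∉ Bᶜ := by
      rw [← hrA']
      show embT hγκ ζ ∉ A'
      rw [hembζ]
      exact hξmem.1.2
    exact h2 h1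
  -- build the ultrafilter
  set F : Filter ↥(Iio γ : Set Ordinal.{0}) :=
    ⟨{B | InV B}, hVuniv, fun h hsub => hVmono _ _ h hsub, fun h1 h2 => hVinter _ _ h1 h2⟩
    with hF
  have hFmem : ∀ B : Set ↥(Iio γ : Set Ordinal.{0}), B ∈ F ↔ InV B := fun B => Iff.rfl
  have hcnm : ∀ B : Set ↥(Iio γ : Set Ordinal.{0}), Bᶜ ∉ F ↔ B ∈ F := by
    intro B
    rw [hFmem, hFmem]
    constructor
    · intro hn
      by_contra hnB
      exact hn (hVultra B hnB)
    · intro hB hBc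
      have := hVinter _ _ hB hBc
      rw [Set.inter_compl_self] at this
      exact hproper this
  set V : Ultrafilter ↥(Iio γ : Set Ordinal.{0}) := Ultrafilter.ofComplNotMemIff F hcnm
    with hV
  have hVmem : ∀ B : Set ↥(Iio γ : Set Ordinal.{0}), B ∈ V ↔ InV B := fun B => Iff.rfl
  -- nonprincipality of V
  have hVnonpr : Nonprincipal V := by
    intro ζ hζ
    obtain ⟨A, hcA, hdA, hrA⟩ := (hVmem {ζ}).mp hζ
    obtain ⟨ξ, hξA, hξx, hξne⟩ := hNonpr A hcA hdA (embT hγκ ζ) (embmem ζ)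
    set ζ' : ↥(Iio γ : Set Ordinal.{0}) := ⟨(ξ : Ordinal), Set.mem_Iio.mpr (memmp ξ hξx)⟩
      with hζ'def
    have hembζ' : embT hγκ ζ' = ξ := Subtype.ext rfl
    have : ζ' ∈ resT hγκ A := by show embT hγκ ζ' ∈ A; rw [hembζ']; exact hξA
    rw [hrA] at this
    have hζζ' : ζ' = ζ := this
    apply hξne
    rw [← hembζ', hζζ']
  -- completeness of V
  have hVcomp : KComplete δ V := by
    intro ι Bi hι hBi
    rcases isEmpty_or_nonempty ι with hemp | hne
    · rw [Set.iInter_of_empty]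
      exact (hVmem _).mpr hVuniv
    by_contra hni
    have hniV : ¬ InV (⋂ i, Bi i) := fun h => hni ((hVmem _).mpr h)
    -- an injection of ι into the ordinals below γ
    have hcγ : (#ι).ord < γ := by rw [← hcard]; exact Cardinal.ord_lt_ord.mpr hι
    have hembn : Nonempty (ι ↪ ↥(Iio (#ι).ord : Set Ordinal.{0})) := by
      rw [← Cardinal.lift_mk_le.{0}]
      rw [Ordinal.mk_Iio_ordinal, Cardinal.card_ord]
      simp
    obtain ⟨embc⟩ := hembn
    set w : ι → ↥(Iio γ : Set Ordinal.{0}) := fun i =>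
      ⟨((embc i : ↥(Iio (#ι).ord : Set Ordinal.{0})) : Ordinal),
        Set.mem_Iio.mpr (lt_trans (Set.mem_Iio.mp (embc i).2) hcγ)⟩ with hw
    have winj : Function.Injective w := by
      intro a b h
      apply embc.injective
      apply Subtype.ext
      exact congrArg (fun z : ↥(Iio γ : Set Ordinal.{0}) => (z : Ordinal)) h
    set βo : Ordinal.{0} := Order.succ (#ι).ord with hβo
    have hγlim : Order.IsSuccLimit γ := by rw [← hcard]; exact Cardinal.isSuccLimit_ord hδℵ.le
    have hβoγ : βo < γ := hγlim.succ_lt hcγ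
    have hwβ : ∀ i, Order.succ ((w i : ↥(Iio γ : Set Ordinal.{0})) : Ordinal) < βo :=
      fun i => Order.succ_lt_succ (Set.mem_Iio.mp (embc i).2)
    have hwγ : ∀ i, Order.succ ((w i : ↥(Iio γ : Set Ordinal.{0})) : Ordinal) < γ :=
      fun i => lt_trans (hwβ i) hβoγ
    -- the partition function on the ordinals below γ
    set g : ↥(Iio γ : Set Ordinal.{0}) → ↥(Iio γ : Set Ordinal.{0}) := fun ζ =>
      if h : ∀ i, ζ ∈ Bi i then ⟨0, Set.mem_Iio.mpr h0γ⟩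
      else ⟨Order.succ ((w (Classical.choose (not_forall.mp h)) :
          ↥(Iio γ : Set Ordinal.{0})) : Ordinal),
        Set.mem_Iio.mpr (hwγ _)⟩ with hg
    have hgβ : ∀ ζ, ((g ζ : ↥(Iio γ : Set Ordinal.{0})) : Ordinal) < βo := by
      intro ζ
      by_cases h : ∀ i, ζ ∈ Bi i
      · simp only [hg, dif_pos h]
        exact lt_of_le_of_lt zero_le (Order.lt_succ _)
      · simp only [hg, dif_neg h]
        exact hwβ _
    -- extend g to a coded function
    set G₀ : KT κ → KT κ := fun ξ =>
      if h : (ξ : Ordinal) < γ then embT hγκ (g ⟨(ξ : Ordinal), Set.mem_Iio.mpr h⟩)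
      else ⟨0, Set.mem_Iio.mpr hκ0⟩ with hG₀
    have hG₀mem : ∀ ξ : KT κ, (ξ : Ordinal) ∈ (x : Set Ordinal) →
        ((G₀ ξ : KT κ) : Ordinal) ∈ (x : Set Ordinal) := by
      intro ξ hξ
      have h := memmp ξ hξ
      simp only [hG₀, dif_pos h]
      exact embmem _
    obtain ⟨G, hGc, hGeq⟩ := hFtot G₀ hG₀mem
    set βK : KT κ := ⟨βo, Set.mem_Iio.mpr (lt_trans hβoγ hγκ)⟩ with hβK
    have hβKx : ((βK : KT κ) : Ordinal) ∈ (x : Set Ordinal) := memmpr _ hβoγ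
    have hGbound : ∀ ξ : KT κ, (ξ : Ordinal) ∈ (x : Set Ordinal) →
        ((G ξ : KT κ) : Ordinal) < ((βK : KT κ) : Ordinal) := by
      intro ξ hξ
      rw [hGeq ξ hξ]
      have h := memmp ξ hξ
      simp only [hG₀, dif_pos h]
      exact hgβ _
    obtain ⟨η, A, hηβ, hAc, hAD, hiff⟩ := hPart G hGc βK hβKx hGbound
    have hInVA : InV (resT hγκ A) := ⟨A, hAc, hAD, rfl⟩
    -- identify the trace of A as a fiber of g
    have hresA : resT hγκ A = {ζ : ↥(Iio γ : Set Ordinal.{0}) |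
        ((g ζ : ↥(Iio γ : Set Ordinal.{0})) : Ordinal) = (η : Ordinal)} := by
      ext ζ
      have hmem := embmem ζ
      have h1 : embT hγκ ζ ∈ A ↔ G (embT hγκ ζ) = η := hiff _ hmem
      have h2 : G (embT hγκ ζ) = G₀ (embT hγκ ζ) := hGeq _ hmem
      have hζγ : ((embT hγκ ζ : KT κ) : Ordinal) < γ := Set.mem_Iio.mp ζ.2
      have h3 : G₀ (embT hγκ ζ) = embT hγκ (g ζ) := by
        simp only [hG₀, dif_pos hζγ]
        rfl
      constructor
      · intro hζ
        have := h1.mp hζ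
        rw [h2, h3] at this
        exact congrArg (fun z : KT κ => (z : Ordinal)) this
      · intro hζ
        apply h1.mpr
        rw [h2, h3]
        exact Subtype.ext hζ
    -- case analysis on the fiber value
    by_cases h0 : (η : Ordinal) = 0
    · apply hniV
      have hEq : resT hγκ A = ⋂ i, Bi i := by
        rw [hresA]
        ext ζ
        simp only [Set.mem_setOf_eq, Set.mem_iInter]
        constructor
        · intro hgζ i
          by_cases hall : ∀ j, ζ ∈ Bi j
          · exact hall i
          · exfalso
            rw [hg] at hgζ
            simp only [dif_neg hall] at hgζ
            rw [h0] at hgζ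
            exact Ordinal.succ_ne_zero _ hgζ
        · intro hall
          rw [hg]
          simp only [dif_pos hall]
          exact h0.symm
      rw [← hEq]
      exact hInVA
    · by_cases hr : ∃ i, (η : Ordinal) =
          Order.succ ((w i : ↥(Iio γ : Set Ordinal.{0})) : Ordinal)
      · obtain ⟨i₀, hi₀⟩ := hr
        have hsub : resT hγκ A ∩ Bi i₀ = ∅ := by
          rw [Set.eq_empty_iff_forall_notMem]
          rintro ζ ⟨hζA, hζB⟩
          rw [hresA] at hζA
          have hgζ : ((g ζ : ↥(Iio γ : Set Ordinal.{0})) : Ordinal) = (η : Ordinal) := hζA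
          by_cases hall : ∀ j, ζ ∈ Bi j
          · rw [hg] at hgζ
            simp only [dif_pos hall] at hgζ
            exact h0 hgζ.symm
          · rw [hg] at hgζ
            simp only [dif_neg hall] at hgζ
            rw [hi₀] at hgζ
            have hww := Order.succ_injective hgζ
            have hj : Classical.choose (not_forall.mp hall) = i₀ :=
              winj (Subtype.ext hww)
            have hspec := Classical.choose_spec (not_forall.mp hall)
            rw [hj] at hspec
            exact hspec hζB
        have hInter : InV (resT hγκ A ∩ Bi i₀) :=
          hVinter _ _ hInVA ((hVmem _).mp (hBi i₀))
        rw [hsub] at hInter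
        exact hproper hInter
      · have hEq : resT hγκ A = ∅ := by
          rw [Set.eq_empty_iff_forall_notMem]
          intro ζ hζ
          rw [hresA] at hζ
          have hgζ : ((g ζ : ↥(Iio γ : Set Ordinal.{0})) : Ordinal) = (η : Ordinal) := hζ
          by_cases hall : ∀ j, ζ ∈ Bi j
          · rw [hg] at hgζ
            simp only [dif_pos hall] at hgζ
            exact h0 hgζ.symm
          · rw [hg] at hgζ
            simp only [dif_neg hall] at hgζ
            exact hr ⟨Classical.choose (not_forall.mp hall), hgζ.symm⟩
        rw [hEq] at hInVA
        exact hproper hInVA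
  -- conclude
  refine ⟨δ, hδκ, ⟨hδℵ, ?_⟩, hlimitsc⟩
  have hIio : (Iio δ.ord : Set Ordinal.{0}) = Iio γ := by rw [hcard]
  rw [hIio]
  exact ⟨V, hVcomp, hVnonpr⟩
end Chunk6

/-- If κ is the least measurable limit of supercompact cardinals, then κ is not
2^κ-supercompact. -/
theorem least_measurable_limit_not_two_pow_supercompact
    (κ : Cardinal.{0}) (hmeas : IsMeasurableCard κ)
    (hub : ∀ α < κ, ∃ δ : Cardinal.{0}, α < δ ∧ δ < κ ∧ IsSupercompactCard δ)
    (hleast : ∀ δ : Cardinal.{0}, δ < κ →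
      ¬ (IsMeasurableCard δ ∧
          ∀ α < δ, ∃ ρ : Cardinal.{0}, α < ρ ∧ ρ < δ ∧ IsSupercompactCard ρ)) :
    ¬ IsSupercompactTo κ (2 ^ κ) := by
  intro hsc
  obtain ⟨δ, hδκ, hmeasδ, hlim⟩ := exists_smaller κ hmeas hub hsc
  exact hleast δ hδκ ⟨hmeasδ, hlim⟩
end
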